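/- arXiv:2104.09329 — 3 statements merged into one kernel-verified Lean document; each statement's English description precedes it below -/
import Mathlib

section
/- Under the same hypotheses as the boundary power-balance statement for the clamped/free plate (smooth solution of ∂ₜw = p/(ρA), ∂ₜp = −D_E Δ²w on ℝ × B; clamped at z¹ = 0; free at z¹ = L₁; M₁ = 0 on the edges z² ∈ {0, L₂}; ∂₁∂₂w = 0 at the corners (L₁,0) and (L₁,L₂)), assume additionally that the shear force vanishes on the two z²-edges, i.e. ∂₂³w + (2−ν)∂₁²∂₂w = 0 at z² = 0 and z² = L₂ for all z¹ ∈ [0,L₁] and all t. Then the total energy 𝓗(t) = ∫_B [ p²/(2ρA) + (D_E/2)((∂₁²w)² + (∂₂²w)² + 2ν ∂₁²w ∂₂²w + 2(1−ν)(∂₁∂₂w)²) ] dz is constant in t. -/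
open MeasureTheory intervalIntegral

noncomputable section

/-- Partial derivative with respect to time `t` of a field `u (t, z¹, z²)`. -/
def pT (u : ℝ → ℝ → ℝ → ℝ) : ℝ → ℝ → ℝ → ℝ := fun t z1 z2 => deriv (fun s => u s z1 z2) t

/-- Partial derivative with respect to the first spatial coordinate `z¹`. -/
def pZ1 (u : ℝ → ℝ → ℝ → ℝ) : ℝ → ℝ → ℝ → ℝ := fun t z1 z2 => deriv (fun s => u t s z2) z1

/-- Partial derivative with respect to the second spatial coordinate `z²`. -/
def pZ2 (u : ℝ → ℝ → ℝ → ℝ) : ℝ → ℝ → ℝ → ℝ := fun t z1 z2 => deriv (fun s => u t z1 s) z2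

/-- The biharmonic operator `Δ²w = ∂₁⁴w + 2∂₁²∂₂²w + ∂₂⁴w` at fixed time. -/
def biharm (w : ℝ → ℝ → ℝ → ℝ) : ℝ → ℝ → ℝ → ℝ := fun t z1 z2 =>
  pZ1 (pZ1 (pZ1 (pZ1 w))) t z1 z2 + 2 * pZ1 (pZ1 (pZ2 (pZ2 w))) t z1 z2
    + pZ2 (pZ2 (pZ2 (pZ2 w))) t z1 z2

/-- A field `u (t, z¹, z²)` is smooth if the uncurried map is `C^∞`. -/
def SmoothField (u : ℝ → ℝ → ℝ → ℝ) : Prop :=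
  ContDiff ℝ (⊤ : ℕ∞) (fun q : ℝ × ℝ × ℝ => u q.1 q.2.1 q.2.2)

/-- The Kirchhoff plate energy density
`p²/(2ρA) + (D_E/2)((∂₁²w)² + (∂₂²w)² + 2ν ∂₁²w ∂₂²w + 2(1−ν)(∂₁∂₂w)²)`. -/
def plateDensity (ρA D_E ν : ℝ) (w p : ℝ → ℝ → ℝ → ℝ) (t z1 z2 : ℝ) : ℝ :=
  p t z1 z2 ^ 2 / (2 * ρA)
    + D_E / 2 * ((pZ1 (pZ1 w) t z1 z2) ^ 2 + (pZ2 (pZ2 w) t z1 z2) ^ 2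
        + 2 * ν * pZ1 (pZ1 w) t z1 z2 * pZ2 (pZ2 w) t z1 z2
        + 2 * (1 - ν) * (pZ1 (pZ2 w) t z1 z2) ^ 2)

/-- The total plate energy `𝓗(t) = ∫_B plateDensity dz`. -/
def plateEnergy (L1 L2 ρA D_E ν : ℝ) (w p : ℝ → ℝ → ℝ → ℝ) (t : ℝ) : ℝ :=
  ∫ z1 in (0:ℝ)..L1, ∫ z2 in (0:ℝ)..L2, plateDensity ρA D_E ν w p t z1 z2

/-- Effective shear force `Q₁ = D_E(∂₂³w + (2−ν)∂₁²∂₂w)`. -/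
def Q1 (D_E ν : ℝ) (w : ℝ → ℝ → ℝ → ℝ) (t z1 z2 : ℝ) : ℝ :=
  D_E * (pZ2 (pZ2 (pZ2 w)) t z1 z2 + (2 - ν) * pZ1 (pZ1 (pZ2 w)) t z1 z2)

/-- The port-Hamiltonian plate dynamics `∂ₜw = p/(ρA)`, `∂ₜp = −D_E Δ²w`
holding on `ℝ × B` with `B = [0,L₁]×[0,L₂]`. -/
def PlateDynamics (L1 L2 ρA D_E : ℝ) (w p : ℝ → ℝ → ℝ → ℝ) : Prop :=
  ∀ t : ℝ, ∀ z1 ∈ Set.Icc (0:ℝ) L1, ∀ z2 ∈ Set.Icc (0:ℝ) L2,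
    pT w t z1 z2 = p t z1 z2 / ρA ∧
    pT p t z1 z2 = -(D_E * biharm w t z1 z2)

/-- Clamped edge `z¹ = 0`, free edge `z¹ = L₁`, zero bending moment on the two
edges `z² ∈ {0, L₂}`, and free-corner conditions at `(L₁,0)` and `(L₁,L₂)`. -/
def PlateBC (L1 L2 ν : ℝ) (w : ℝ → ℝ → ℝ → ℝ) : Prop :=
  ∀ t : ℝ,
    (∀ z2 ∈ Set.Icc (0:ℝ) L2, w t 0 z2 = 0 ∧ pZ1 w t 0 z2 = 0) ∧
    (∀ z2 ∈ Set.Icc (0:ℝ) L2,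
      pZ1 (pZ1 (pZ1 w)) t L1 z2 + (2 - ν) * pZ1 (pZ2 (pZ2 w)) t L1 z2 = 0 ∧
      pZ1 (pZ1 w) t L1 z2 + ν * pZ2 (pZ2 w) t L1 z2 = 0) ∧
    (∀ z1 ∈ Set.Icc (0:ℝ) L1,
      pZ2 (pZ2 w) t z1 0 + ν * pZ1 (pZ1 w) t z1 0 = 0 ∧
      pZ2 (pZ2 w) t z1 L2 + ν * pZ1 (pZ1 w) t z1 L2 = 0) ∧
    (pZ1 (pZ2 w) t L1 0 = 0 ∧ pZ1 (pZ2 w) t L1 L2 = 0)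

set_option maxHeartbeats 1000000

namespace Plate

def U (u : ℝ → ℝ → ℝ → ℝ) : ℝ × ℝ × ℝ → ℝ := fun q => u q.1 q.2.1 q.2.2

lemma hasDerivAt_T (h : SmoothField u) (t z1 z2 : ℝ) :
    HasDerivAt (fun s => u s z1 z2) (fderiv ℝ (U u) (t, z1, z2) (1, 0, 0)) t := by
  have hline : HasDerivAt (fun s : ℝ => ((s, z1, z2) : ℝ × ℝ × ℝ)) ((1:ℝ), (0:ℝ), (0:ℝ)) t :=
    (hasDerivAt_id t).prodMk ((hasDerivAt_const t z1).prodMk (hasDerivAt_const t z2))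
  exact ((h.differentiable (by norm_cast) (t, z1, z2)).hasFDerivAt.comp_hasDerivAt t hline)

lemma hasDerivAt_Z1 (h : SmoothField u) (t z1 z2 : ℝ) :
    HasDerivAt (fun s => u t s z2) (fderiv ℝ (U u) (t, z1, z2) (0, 1, 0)) z1 := by
  have hline : HasDerivAt (fun s : ℝ => ((t, s, z2) : ℝ × ℝ × ℝ)) ((0:ℝ), (1:ℝ), (0:ℝ)) z1 :=
    (hasDerivAt_const z1 t).prodMk ((hasDerivAt_id z1).prodMk (hasDerivAt_const z1 z2))
  exact ((h.differentiable (by norm_cast) (t, z1, z2)).hasFDerivAt.comp_hasDerivAt z1 hline)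

lemma hasDerivAt_Z2 (h : SmoothField u) (t z1 z2 : ℝ) :
    HasDerivAt (fun s => u t z1 s) (fderiv ℝ (U u) (t, z1, z2) (0, 0, 1)) z2 := by
  have hline : HasDerivAt (fun s : ℝ => ((t, z1, s) : ℝ × ℝ × ℝ)) ((0:ℝ), (0:ℝ), (1:ℝ)) z2 :=
    (hasDerivAt_const z2 t).prodMk ((hasDerivAt_const z2 z1).prodMk (hasDerivAt_id z2))
  exact ((h.differentiable (by norm_cast) (t, z1, z2)).hasFDerivAt.comp_hasDerivAt z2 hline)

lemma pT_eq (h : SmoothField u) (t z1 z2 : ℝ) :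
    pT u t z1 z2 = fderiv ℝ (U u) (t, z1, z2) (1, 0, 0) := (hasDerivAt_T h t z1 z2).deriv

lemma pZ1_eq (h : SmoothField u) (t z1 z2 : ℝ) :
    pZ1 u t z1 z2 = fderiv ℝ (U u) (t, z1, z2) (0, 1, 0) := (hasDerivAt_Z1 h t z1 z2).deriv

lemma pZ2_eq (h : SmoothField u) (t z1 z2 : ℝ) :
    pZ2 u t z1 z2 = fderiv ℝ (U u) (t, z1, z2) (0, 0, 1) := (hasDerivAt_Z2 h t z1 z2).deriv

lemma smooth_dfield (h : SmoothField u) (e : ℝ × ℝ × ℝ) :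
    ContDiff ℝ (⊤ : ℕ∞) (fun q : ℝ × ℝ × ℝ => fderiv ℝ (U u) q e) :=
  (ContinuousLinearMap.apply ℝ ℝ e).contDiff.comp (h.fderiv_right (by norm_cast))

lemma smooth_pT (h : SmoothField u) : SmoothField (pT u) := by
  have : (fun q : ℝ × ℝ × ℝ => pT u q.1 q.2.1 q.2.2)
      = fun q : ℝ × ℝ × ℝ => fderiv ℝ (U u) q (1, 0, 0) := by
    funext q; exact pT_eq h q.1 q.2.1 q.2.2
  rw [SmoothField, this]; exact smooth_dfield h _

lemma smooth_pZ1 (h : SmoothField u) : SmoothField (pZ1 u) := by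
  have : (fun q : ℝ × ℝ × ℝ => pZ1 u q.1 q.2.1 q.2.2)
      = fun q : ℝ × ℝ × ℝ => fderiv ℝ (U u) q (0, 1, 0) := by
    funext q; exact pZ1_eq h q.1 q.2.1 q.2.2
  rw [SmoothField, this]; exact smooth_dfield h _

lemma smooth_pZ2 (h : SmoothField u) : SmoothField (pZ2 u) := by
  have : (fun q : ℝ × ℝ × ℝ => pZ2 u q.1 q.2.1 q.2.2)
      = fun q : ℝ × ℝ × ℝ => fderiv ℝ (U u) q (0, 0, 1) := by
    funext q; exact pZ2_eq h q.1 q.2.1 q.2.2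
  rw [SmoothField, this]; exact smooth_pZ2_aux h
  where smooth_pZ2_aux (h : SmoothField u) := smooth_dfield h ((0:ℝ), (0:ℝ), (1:ℝ))

end Plate

namespace Plate

lemma U_pT (h : SmoothField u) : U (pT u) = fun q => fderiv ℝ (U u) q (1, 0, 0) := by
  funext q; exact pT_eq h q.1 q.2.1 q.2.2

lemma U_pZ1 (h : SmoothField u) : U (pZ1 u) = fun q => fderiv ℝ (U u) q (0, 1, 0) := by
  funext q; exact pZ1_eq h q.1 q.2.1 q.2.2

lemma U_pZ2 (h : SmoothField u) : U (pZ2 u) = fun q => fderiv ℝ (U u) q (0, 0, 1) := by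
  funext q; exact pZ2_eq h q.1 q.2.1 q.2.2

lemma fderiv_swap (h : SmoothField u) (a b q : ℝ × ℝ × ℝ) :
    fderiv ℝ (fun x => fderiv ℝ (U u) x a) q b
      = fderiv ℝ (fun x => fderiv ℝ (U u) x b) q a := by
  have hd : DifferentiableAt ℝ (fderiv ℝ (U u)) q :=
    (h.fderiv_right (m := (⊤:ℕ∞)) (by decide)).differentiable (by decide) q
  have hsymm : IsSymmSndFDerivAt ℝ (U u) q :=
    h.contDiffAt.isSymmSndFDerivAt (by simp; exact WithTop.coe_le_coe.mpr le_top)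
  have h1 : HasFDerivAt (fun x => fderiv ℝ (U u) x a)
      ((ContinuousLinearMap.apply ℝ ℝ a).comp (fderiv ℝ (fderiv ℝ (U u)) q)) q :=
    (ContinuousLinearMap.apply ℝ ℝ a).hasFDerivAt.comp q hd.hasFDerivAt
  have h2 : HasFDerivAt (fun x => fderiv ℝ (U u) x b)
      ((ContinuousLinearMap.apply ℝ ℝ b).comp (fderiv ℝ (fderiv ℝ (U u)) q)) q :=
    (ContinuousLinearMap.apply ℝ ℝ b).hasFDerivAt.comp q hd.hasFDerivAt
  rw [h1.fderiv, h2.fderiv]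
  simpa using hsymm b a

lemma pT_pZ1_comm (h : SmoothField u) : pT (pZ1 u) = pZ1 (pT u) := by
  funext t z1 z2
  rw [show pT (pZ1 u) t z1 z2 = _ from pT_eq (smooth_pZ1 h) t z1 z2,
    show pZ1 (pT u) t z1 z2 = _ from pZ1_eq (smooth_pT h) t z1 z2, U_pZ1 h, U_pT h]
  exact fderiv_swap h _ _ _

lemma pT_pZ2_comm (h : SmoothField u) : pT (pZ2 u) = pZ2 (pT u) := by
  funext t z1 z2
  rw [show pT (pZ2 u) t z1 z2 = _ from pT_eq (smooth_pZ2 h) t z1 z2,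
    show pZ2 (pT u) t z1 z2 = _ from pZ2_eq (smooth_pT h) t z1 z2, U_pZ2 h, U_pT h]
  exact fderiv_swap h _ _ _

lemma pZ1_pZ2_comm (h : SmoothField u) : pZ1 (pZ2 u) = pZ2 (pZ1 u) := by
  funext t z1 z2
  rw [show pZ1 (pZ2 u) t z1 z2 = _ from pZ1_eq (smooth_pZ2 h) t z1 z2,
    show pZ2 (pZ1 u) t z1 z2 = _ from pZ2_eq (smooth_pZ1 h) t z1 z2, U_pZ2 h, U_pZ1 h]
  exact fderiv_swap h _ _ _

lemma continuous_U (h : SmoothField u) : Continuous (U u) := h.continuous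

end Plate

namespace Plate

lemma hT (h : SmoothField u) (t z1 z2 : ℝ) :
    HasDerivAt (fun s => u s z1 z2) (pT u t z1 z2) t := by
  rw [pT_eq h]; exact hasDerivAt_T h t z1 z2

lemma hZ1 (h : SmoothField u) (t z1 z2 : ℝ) :
    HasDerivAt (fun s => u t s z2) (pZ1 u t z1 z2) z1 := by
  rw [pZ1_eq h]; exact hasDerivAt_Z1 h t z1 z2

lemma hZ2 (h : SmoothField u) (t z1 z2 : ℝ) :
    HasDerivAt (fun s => u t z1 s) (pZ2 u t z1 z2) z2 := by
  rw [pZ2_eq h]; exact hasDerivAt_Z2 h t z1 z2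

/-- `X` component of the energy flux. -/
def Xf (ν : ℝ) (w : ℝ → ℝ → ℝ → ℝ) : ℝ → ℝ → ℝ → ℝ := fun t z1 z2 =>
  (pZ1 (pZ1 w) t z1 z2 + ν * pZ2 (pZ2 w) t z1 z2) * pZ1 (pT w) t z1 z2
    + (1 - ν) * pZ1 (pZ2 w) t z1 z2 * pZ2 (pT w) t z1 z2
    - pT w t z1 z2 * (pZ1 (pZ1 (pZ1 w)) t z1 z2 + pZ1 (pZ2 (pZ2 w)) t z1 z2)

/-- `Y` component of the energy flux. -/
def Yf (ν : ℝ) (w : ℝ → ℝ → ℝ → ℝ) : ℝ → ℝ → ℝ → ℝ := fun t z1 z2 =>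
  (1 - ν) * pZ1 (pZ2 w) t z1 z2 * pZ1 (pT w) t z1 z2
    + (pZ2 (pZ2 w) t z1 z2 + ν * pZ1 (pZ1 w) t z1 z2) * pZ2 (pT w) t z1 z2
    - pT w t z1 z2 * (pZ1 (pZ1 (pZ2 w)) t z1 z2 + pZ2 (pZ2 (pZ2 w)) t z1 z2)

section ClaimA
variable {w : ℝ → ℝ → ℝ → ℝ}

lemma claimA (hw : SmoothField w) (ν : ℝ) (t z1 z2 : ℝ) :
    pZ1 (Xf ν w) t z1 z2 + pZ2 (Yf ν w) t z1 z2 =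
      (pZ1 (pZ1 w) t z1 z2 + ν * pZ2 (pZ2 w) t z1 z2) * pZ1 (pZ1 (pT w)) t z1 z2
      + (pZ2 (pZ2 w) t z1 z2 + ν * pZ1 (pZ1 w) t z1 z2) * pZ2 (pZ2 (pT w)) t z1 z2
      + 2 * (1 - ν) * pZ1 (pZ2 w) t z1 z2 * pZ1 (pZ2 (pT w)) t z1 z2
      - pT w t z1 z2 * biharm w t z1 z2 := by
  have HX : HasDerivAt (fun s => Xf ν w t s z2) _ z1 :=
    ((((hZ1 (smooth_pZ1 (smooth_pZ1 hw)) t z1 z2).add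
          ((hZ1 (smooth_pZ2 (smooth_pZ2 hw)) t z1 z2).const_mul ν)).mul
        (hZ1 (smooth_pZ1 (smooth_pT hw)) t z1 z2)).add
      (((hZ1 (smooth_pZ1 (smooth_pZ2 hw)) t z1 z2).const_mul (1 - ν)).mul
        (hZ1 (smooth_pZ2 (smooth_pT hw)) t z1 z2))).sub
      ((hZ1 (smooth_pT hw) t z1 z2).mul
        ((hZ1 (smooth_pZ1 (smooth_pZ1 (smooth_pZ1 hw))) t z1 z2).add
          (hZ1 (smooth_pZ1 (smooth_pZ2 (smooth_pZ2 hw))) t z1 z2)))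
  have HY : HasDerivAt (fun s => Yf ν w t z1 s) _ z2 :=
    ((((hZ2 (smooth_pZ1 (smooth_pZ2 hw)) t z1 z2).const_mul (1 - ν)).mul
        (hZ2 (smooth_pZ1 (smooth_pT hw)) t z1 z2)).add
      (((hZ2 (smooth_pZ2 (smooth_pZ2 hw)) t z1 z2).add
          ((hZ2 (smooth_pZ1 (smooth_pZ1 hw)) t z1 z2).const_mul ν)).mul
        (hZ2 (smooth_pZ2 (smooth_pT hw)) t z1 z2))).sub
      ((hZ2 (smooth_pT hw) t z1 z2).mul
        ((hZ2 (smooth_pZ1 (smooth_pZ1 (smooth_pZ2 hw))) t z1 z2).add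
          (hZ2 (smooth_pZ2 (smooth_pZ2 (smooth_pZ2 hw))) t z1 z2)))
  have hx : pZ1 (Xf ν w) t z1 z2 = _ := HX.deriv
  have hy : pZ2 (Yf ν w) t z1 z2 = _ := HY.deriv
  rw [hx, hy]
  have c1 : pZ2 (pZ1 (pZ2 w)) = pZ1 (pZ2 (pZ2 w)) := (pZ1_pZ2_comm (smooth_pZ2 hw)).symm
  have c2 : pZ2 (pZ1 (pT w)) = pZ1 (pZ2 (pT w)) := (pZ1_pZ2_comm (smooth_pT hw)).symm
  have c3 : pZ2 (pZ1 (pZ1 (pZ2 w))) = pZ1 (pZ1 (pZ2 (pZ2 w))) := by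
    rw [← pZ1_pZ2_comm (smooth_pZ1 (smooth_pZ2 hw)), ← pZ1_pZ2_comm (smooth_pZ2 hw)]
  have c4 : pZ2 (pZ1 (pZ1 w)) = pZ1 (pZ1 (pZ2 w)) := by
    rw [← pZ1_pZ2_comm (smooth_pZ1 hw), ← pZ1_pZ2_comm hw]
  rw [c1, c2, c3, c4, biharm]
  simp only [Pi.add_apply]
  ring
end ClaimA
end Plate

namespace Plate
section ClaimB
variable {w p : ℝ → ℝ → ℝ → ℝ}

lemma pT_density (hw : SmoothField w) (hp : SmoothField p) (ρA D_E ν : ℝ) (t z1 z2 : ℝ) :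
    pT (plateDensity ρA D_E ν w p) t z1 z2 =
      2 * p t z1 z2 * pT p t z1 z2 / (2 * ρA)
      + D_E / 2 * (2 * pZ1 (pZ1 w) t z1 z2 * pZ1 (pZ1 (pT w)) t z1 z2
          + 2 * pZ2 (pZ2 w) t z1 z2 * pZ2 (pZ2 (pT w)) t z1 z2
          + 2 * ν * (pZ1 (pZ1 (pT w)) t z1 z2 * pZ2 (pZ2 w) t z1 z2
              + pZ1 (pZ1 w) t z1 z2 * pZ2 (pZ2 (pT w)) t z1 z2)
          + 2 * (1 - ν) * (2 * pZ1 (pZ2 w) t z1 z2 * pZ1 (pZ2 (pT w)) t z1 z2)) := by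
  have h20 := hT (smooth_pZ1 (smooth_pZ1 hw)) t z1 z2
  have h02 := hT (smooth_pZ2 (smooth_pZ2 hw)) t z1 z2
  have h11 := hT (smooth_pZ1 (smooth_pZ2 hw)) t z1 z2
  have hpp := hT hp t z1 z2
  have HD : HasDerivAt (fun τ => plateDensity ρA D_E ν w p τ z1 z2) _ t :=
    ((hpp.pow 2).div_const (2 * ρA)).add
      (((((h20.pow 2).add (h02.pow 2)).add
          ((h20.const_mul (2 * ν)).mul h02)).add
        ((h11.pow 2).const_mul (2 * (1 - ν)))).const_mul (D_E / 2))
  have hd : pT (plateDensity ρA D_E ν w p) t z1 z2 = _ := HD.deriv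
  rw [hd]
  have ct1 : pT (pZ1 (pZ1 w)) = pZ1 (pZ1 (pT w)) := by
    rw [pT_pZ1_comm (smooth_pZ1 hw), pT_pZ1_comm hw]
  have ct2 : pT (pZ2 (pZ2 w)) = pZ2 (pZ2 (pT w)) := by
    rw [pT_pZ2_comm (smooth_pZ2 hw), pT_pZ2_comm hw]
  have ct3 : pT (pZ1 (pZ2 w)) = pZ1 (pZ2 (pT w)) := by
    rw [pT_pZ1_comm (smooth_pZ2 hw), pT_pZ2_comm hw]
  rw [ct1, ct2, ct3]
  push_cast
  ring

lemma claimB {L1 L2 ρA D_E : ℝ} (hw : SmoothField w) (hp : SmoothField p)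
    (hρA : ρA ≠ 0) (hdyn : PlateDynamics L1 L2 ρA D_E w p) (ν : ℝ)
    (t : ℝ) {z1 z2 : ℝ} (hz1 : z1 ∈ Set.Icc (0:ℝ) L1) (hz2 : z2 ∈ Set.Icc (0:ℝ) L2) :
    pT (plateDensity ρA D_E ν w p) t z1 z2 =
      D_E * (pZ1 (Xf ν w) t z1 z2 + pZ2 (Yf ν w) t z1 z2) := by
  obtain ⟨h1, h2⟩ := hdyn t z1 hz1 z2 hz2
  have hpv : p t z1 z2 = ρA * pT w t z1 z2 := by rw [h1]; field_simp
  rw [pT_density hw hp ρA D_E ν t z1 z2, claimA hw ν t z1 z2, h2, hpv]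
  field_simp
  ring
end ClaimB
end Plate

namespace Plate
section Int
variable {u w p : ℝ → ℝ → ℝ → ℝ}

lemma contsl0 (h : SmoothField u) (z1 z2 : ℝ) : Continuous fun t => u t z1 z2 :=
  (continuous_U h).comp
    (show Continuous fun t : ℝ => ((t, z1, z2) : ℝ × ℝ × ℝ) by fun_prop)

lemma contsl1 (h : SmoothField u) (t z2 : ℝ) : Continuous fun z1 => u t z1 z2 :=
  (continuous_U h).comp
    (show Continuous fun z1 : ℝ => ((t, z1, z2) : ℝ × ℝ × ℝ) by fun_prop)

lemma contsl2 (h : SmoothField u) (t z1 : ℝ) : Continuous fun z2 => u t z1 z2 :=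
  (continuous_U h).comp
    (show Continuous fun z2 : ℝ => ((t, z1, z2) : ℝ × ℝ × ℝ) by fun_prop)

lemma FTC_T (h : SmoothField u) (z1 z2 a b : ℝ) :
    ∫ τ in a..b, pT u τ z1 z2 = u b z1 z2 - u a z1 z2 :=
  intervalIntegral.integral_eq_sub_of_hasDerivAt (fun x _ => hT h x z1 z2)
    ((contsl0 (smooth_pT h) z1 z2).intervalIntegrable a b)

lemma FTC_Z1 (h : SmoothField u) (t z2 a b : ℝ) :
    ∫ z1 in a..b, pZ1 u t z1 z2 = u t b z2 - u t a z2 :=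
  intervalIntegral.integral_eq_sub_of_hasDerivAt (fun x _ => hZ1 h t x z2)
    ((contsl1 (smooth_pZ1 h) t z2).intervalIntegrable a b)

lemma FTC_Z2 (h : SmoothField u) (t z1 a b : ℝ) :
    ∫ z2 in a..b, pZ2 u t z1 z2 = u t z1 b - u t z1 a :=
  intervalIntegral.integral_eq_sub_of_hasDerivAt (fun x _ => hZ2 h t z1 x)
    ((contsl2 (smooth_pZ2 h) t z1).intervalIntegrable a b)

/-- Fubini for double interval integrals of a continuous function. -/
lemma swapII {f : ℝ → ℝ → ℝ} (hf : Continuous (Function.uncurry f)) (a b c d : ℝ) :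
    (∫ x in a..b, ∫ y in c..d, f x y) = ∫ y in c..d, ∫ x in a..b, f x y := by
  have hi : Integrable (Function.uncurry f)
      ((volume.restrict (Set.uIoc a b)).prod (volume.restrict (Set.uIoc c d))) := by
    rw [Measure.prod_restrict]
    exact (hf.continuousOn.integrableOn_compact (isCompact_uIcc.prod isCompact_uIcc)).mono_set
      (Set.prod_mono Set.uIoc_subset_uIcc Set.uIoc_subset_uIcc)
  simp only [intervalIntegral_eq_integral_uIoc, MeasureTheory.integral_smul]
  rw [MeasureTheory.integral_integral_swap hi, smul_comm]

lemma smooth_Xf (hw : SmoothField w) (ν : ℝ) : SmoothField (Xf ν w) :=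
  ((((smooth_pZ1 (smooth_pZ1 hw)).add
        (contDiff_const.mul (smooth_pZ2 (smooth_pZ2 hw)))).mul
      (smooth_pZ1 (smooth_pT hw))).add
    ((contDiff_const.mul (smooth_pZ1 (smooth_pZ2 hw))).mul
      (smooth_pZ2 (smooth_pT hw)))).sub
    ((smooth_pT hw).mul
      ((smooth_pZ1 (smooth_pZ1 (smooth_pZ1 hw))).add
        (smooth_pZ1 (smooth_pZ2 (smooth_pZ2 hw)))))

lemma smooth_Yf (hw : SmoothField w) (ν : ℝ) : SmoothField (Yf ν w) :=
  (((contDiff_const.mul (smooth_pZ1 (smooth_pZ2 hw))).mul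
      (smooth_pZ1 (smooth_pT hw))).add
    (((smooth_pZ2 (smooth_pZ2 hw)).add
        (contDiff_const.mul (smooth_pZ1 (smooth_pZ1 hw)))).mul
      (smooth_pZ2 (smooth_pT hw)))).sub
    ((smooth_pT hw).mul
      ((smooth_pZ1 (smooth_pZ1 (smooth_pZ2 hw))).add
        (smooth_pZ2 (smooth_pZ2 (smooth_pZ2 hw)))))

lemma smooth_density (hw : SmoothField w) (hp : SmoothField p) (ρA D_E ν : ℝ) :
    SmoothField (plateDensity ρA D_E ν w p) :=
  ((hp.pow 2).div_const (2 * ρA)).add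
    (contDiff_const.mul
      (((((smooth_pZ1 (smooth_pZ1 hw)).pow 2).add
            ((smooth_pZ2 (smooth_pZ2 hw)).pow 2)).add
          ((contDiff_const.mul (smooth_pZ1 (smooth_pZ1 hw))).mul
            (smooth_pZ2 (smooth_pZ2 hw)))).add
        (contDiff_const.mul ((smooth_pZ1 (smooth_pZ2 hw)).pow 2))))

end Int
end Plate

namespace Plate
section Boundary
variable {w : ℝ → ℝ → ℝ → ℝ} {L1 L2 ν : ℝ}

lemma v_edge (hbc : PlateBC L1 L2 ν w) (t z2 : ℝ) (hz2 : z2 ∈ Set.Icc (0:ℝ) L2) :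
    pT w t 0 z2 = 0 := by
  have hf : (fun τ => w τ 0 z2) = fun _ => (0:ℝ) := funext fun τ => ((hbc τ).1 z2 hz2).1
  show deriv (fun τ => w τ 0 z2) t = 0
  rw [hf]; exact deriv_const t 0

lemma v10_edge (hw : SmoothField w) (hbc : PlateBC L1 L2 ν w) (t z2 : ℝ)
    (hz2 : z2 ∈ Set.Icc (0:ℝ) L2) : pZ1 (pT w) t 0 z2 = 0 := by
  rw [← pT_pZ1_comm hw]
  have hf : (fun τ => pZ1 w τ 0 z2) = fun _ => (0:ℝ) := funext fun τ => ((hbc τ).1 z2 hz2).2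
  show deriv (fun τ => pZ1 w τ 0 z2) t = 0
  rw [hf]; exact deriv_const t 0

lemma v01_edge (hw : SmoothField w) (hbc : PlateBC L1 L2 ν w) (t z2 : ℝ)
    (hz2 : z2 ∈ Set.Ioo (0:ℝ) L2) : pZ2 (pT w) t 0 z2 = 0 := by
  rw [← pT_pZ2_comm hw]
  have hz : ∀ τ, pZ2 w τ 0 z2 = 0 := by
    intro τ
    have hev : (fun y => w τ 0 y) =ᶠ[nhds z2] fun _ => (0:ℝ) := by
      filter_upwards [Ioo_mem_nhds hz2.1 hz2.2] with y hy
      exact ((hbc τ).1 y ⟨hy.1.le, hy.2.le⟩).1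
    show deriv (fun y => w τ 0 y) z2 = 0
    rw [hev.deriv_eq]; exact deriv_const z2 0
  have hf : (fun τ => pZ2 w τ 0 z2) = fun _ => (0:ℝ) := funext hz
  show deriv (fun τ => pZ2 w τ 0 z2) t = 0
  rw [hf]; exact deriv_const t 0

lemma X_left (hw : SmoothField w) (hbc : PlateBC L1 L2 ν w) (t z2 : ℝ)
    (hz2 : z2 ∈ Set.Ioo (0:ℝ) L2) : Xf ν w t 0 z2 = 0 := by
  have h1 := v_edge hbc t z2 ⟨hz2.1.le, hz2.2.le⟩
  have h2 := v10_edge hw hbc t z2 ⟨hz2.1.le, hz2.2.le⟩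
  have h3 := v01_edge hw hbc t z2 hz2
  simp only [Xf, h1, h2, h3]; ring

lemma int_X_left (hw : SmoothField w) (hbc : PlateBC L1 L2 ν w) (hL2 : 0 ≤ L2) (t : ℝ) :
    ∫ z2 in (0:ℝ)..L2, Xf ν w t 0 z2 = 0 := by
  rw [intervalIntegral.integral_of_le hL2, MeasureTheory.integral_Ioc_eq_integral_Ioo,
    MeasureTheory.setIntegral_congr_fun measurableSet_Ioo
      (fun z2 hz2 => X_left hw hbc t z2 hz2)]
  simp

lemma int_X_right (hw : SmoothField w) (hbc : PlateBC L1 L2 ν w) (hL2 : 0 ≤ L2) (t : ℝ) :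
    ∫ z2 in (0:ℝ)..L2, Xf ν w t L1 z2 = 0 := by
  have key : Set.EqOn (fun z2 => Xf ν w t L1 z2)
      (fun z2 => (1 - ν) * (pZ1 (pZ2 (pZ2 w)) t L1 z2 * pT w t L1 z2
          + pZ1 (pZ2 w) t L1 z2 * pZ2 (pT w) t L1 z2)) (Set.uIcc (0:ℝ) L2) := by
    intro z2 hz2
    rw [Set.uIcc_of_le hL2] at hz2
    have hQ := ((hbc t).2.1 z2 hz2).1
    have hM := ((hbc t).2.1 z2 hz2).2
    have e1 : pZ1 (pZ1 w) t L1 z2 = -(ν * pZ2 (pZ2 w) t L1 z2) := by linarith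
    have e2 : pZ1 (pZ1 (pZ1 w)) t L1 z2
        = -((2 - ν) * pZ1 (pZ2 (pZ2 w)) t L1 z2) := by linarith
    simp only [Xf, e1, e2]; ring
  rw [intervalIntegral.integral_congr key, intervalIntegral.integral_const_mul]
  have hD : ∀ y ∈ Set.uIcc (0:ℝ) L2,
      HasDerivAt (fun y => pZ1 (pZ2 w) t L1 y * pT w t L1 y)
        (pZ1 (pZ2 (pZ2 w)) t L1 y * pT w t L1 y
          + pZ1 (pZ2 w) t L1 y * pZ2 (pT w) t L1 y) y := by
    intro y _
    have h := (hZ2 (smooth_pZ1 (smooth_pZ2 hw)) t L1 y).mul (hZ2 (smooth_pT hw) t L1 y)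
    rwa [show pZ2 (pZ1 (pZ2 w)) = pZ1 (pZ2 (pZ2 w)) from
      (pZ1_pZ2_comm (smooth_pZ2 hw)).symm] at h
  have hcont : Continuous fun y => pZ1 (pZ2 (pZ2 w)) t L1 y * pT w t L1 y
      + pZ1 (pZ2 w) t L1 y * pZ2 (pT w) t L1 y :=
    ((contsl2 (smooth_pZ1 (smooth_pZ2 (smooth_pZ2 hw))) t L1).mul
      (contsl2 (smooth_pT hw) t L1)).add
      ((contsl2 (smooth_pZ1 (smooth_pZ2 hw)) t L1).mul
        (contsl2 (smooth_pZ2 (smooth_pT hw)) t L1))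
  rw [intervalIntegral.integral_eq_sub_of_hasDerivAt hD (hcont.intervalIntegrable 0 L2)]
  have c1 : pZ1 (pZ2 w) t L1 L2 = 0 := (hbc t).2.2.2.2
  have c0 : pZ1 (pZ2 w) t L1 0 = 0 := (hbc t).2.2.2.1
  rw [c1, c0]; ring

lemma int_Y_edges (hw : SmoothField w) (hbc : PlateBC L1 L2 ν w)
    (hshear : ∀ t : ℝ, ∀ z1 ∈ Set.Icc (0:ℝ) L1,
      pZ2 (pZ2 (pZ2 w)) t z1 0 + (2 - ν) * pZ1 (pZ1 (pZ2 w)) t z1 0 = 0 ∧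
      pZ2 (pZ2 (pZ2 w)) t z1 L2 + (2 - ν) * pZ1 (pZ1 (pZ2 w)) t z1 L2 = 0)
    (hL1 : 0 ≤ L1) (hL2 : 0 ≤ L2) (t : ℝ) :
    ∫ z1 in (0:ℝ)..L1, (Yf ν w t z1 L2 - Yf ν w t z1 0) = 0 := by
  have key : Set.EqOn (fun z1 => Yf ν w t z1 L2 - Yf ν w t z1 0)
      (fun z1 => (1 - ν) *
        ((pZ1 (pZ1 (pZ2 w)) t z1 L2 * pT w t z1 L2
            + pZ1 (pZ2 w) t z1 L2 * pZ1 (pT w) t z1 L2)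
          - (pZ1 (pZ1 (pZ2 w)) t z1 0 * pT w t z1 0
            + pZ1 (pZ2 w) t z1 0 * pZ1 (pT w) t z1 0))) (Set.uIcc (0:ℝ) L1) := by
    intro z1 hz1
    rw [Set.uIcc_of_le hL1] at hz1
    have hM0 := ((hbc t).2.2.1 z1 hz1).1
    have hML := ((hbc t).2.2.1 z1 hz1).2
    have hQ0 := (hshear t z1 hz1).1
    have hQL := (hshear t z1 hz1).2
    have e1 : pZ2 (pZ2 w) t z1 0 = -(ν * pZ1 (pZ1 w) t z1 0) := by linarith
    have e2 : pZ2 (pZ2 w) t z1 L2 = -(ν * pZ1 (pZ1 w) t z1 L2) := by linarith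
    have e3 : pZ2 (pZ2 (pZ2 w)) t z1 0 = -((2 - ν) * pZ1 (pZ1 (pZ2 w)) t z1 0) := by linarith
    have e4 : pZ2 (pZ2 (pZ2 w)) t z1 L2 = -((2 - ν) * pZ1 (pZ1 (pZ2 w)) t z1 L2) := by linarith
    simp only [Yf, e1, e2, e3, e4]; ring
  rw [intervalIntegral.integral_congr key, intervalIntegral.integral_const_mul]
  have hD : ∀ x ∈ Set.uIcc (0:ℝ) L1,
      HasDerivAt (fun x => pZ1 (pZ2 w) t x L2 * pT w t x L2
          - pZ1 (pZ2 w) t x 0 * pT w t x 0)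
        ((pZ1 (pZ1 (pZ2 w)) t x L2 * pT w t x L2
            + pZ1 (pZ2 w) t x L2 * pZ1 (pT w) t x L2)
          - (pZ1 (pZ1 (pZ2 w)) t x 0 * pT w t x 0
            + pZ1 (pZ2 w) t x 0 * pZ1 (pT w) t x 0)) x := fun x _ =>
    ((hZ1 (smooth_pZ1 (smooth_pZ2 hw)) t x L2).mul (hZ1 (smooth_pT hw) t x L2)).sub
      ((hZ1 (smooth_pZ1 (smooth_pZ2 hw)) t x 0).mul (hZ1 (smooth_pT hw) t x 0))
  have hcont : Continuous fun x => (pZ1 (pZ1 (pZ2 w)) t x L2 * pT w t x L2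
      + pZ1 (pZ2 w) t x L2 * pZ1 (pT w) t x L2)
      - (pZ1 (pZ1 (pZ2 w)) t x 0 * pT w t x 0
        + pZ1 (pZ2 w) t x 0 * pZ1 (pT w) t x 0) :=
    (((contsl1 (smooth_pZ1 (smooth_pZ1 (smooth_pZ2 hw))) t L2).mul
        (contsl1 (smooth_pT hw) t L2)).add
      ((contsl1 (smooth_pZ1 (smooth_pZ2 hw)) t L2).mul
        (contsl1 (smooth_pZ1 (smooth_pT hw)) t L2))).sub
    (((contsl1 (smooth_pZ1 (smooth_pZ1 (smooth_pZ2 hw))) t 0).mul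
        (contsl1 (smooth_pT hw) t 0)).add
      ((contsl1 (smooth_pZ1 (smooth_pZ2 hw)) t 0).mul
        (contsl1 (smooth_pZ1 (smooth_pT hw)) t 0)))
  rw [intervalIntegral.integral_eq_sub_of_hasDerivAt hD (hcont.intervalIntegrable 0 L1)]
  have c1 : pZ1 (pZ2 w) t L1 L2 = 0 := (hbc t).2.2.2.2
  have c0 : pZ1 (pZ2 w) t L1 0 = 0 := (hbc t).2.2.2.1
  have v1 : pT w t 0 L2 = 0 := v_edge hbc t L2 ⟨hL2, le_refl L2⟩
  have v0 : pT w t 0 0 = 0 := v_edge hbc t 0 ⟨le_refl 0, hL2⟩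
  rw [c1, c0, v1, v0]; ring

end Boundary
end Plate

namespace Plate
section Main
variable {w p : ℝ → ℝ → ℝ → ℝ} {L1 L2 ρA D_E ν : ℝ}

lemma Gzero (hw : SmoothField w) (hp : SmoothField p)
    (hL1 : 0 < L1) (hL2 : 0 < L2) (hρA : ρA ≠ 0)
    (hdyn : PlateDynamics L1 L2 ρA D_E w p) (hbc : PlateBC L1 L2 ν w)
    (hshear : ∀ t : ℝ, ∀ z1 ∈ Set.Icc (0:ℝ) L1,
      pZ2 (pZ2 (pZ2 w)) t z1 0 + (2 - ν) * pZ1 (pZ1 (pZ2 w)) t z1 0 = 0 ∧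
      pZ2 (pZ2 (pZ2 w)) t z1 L2 + (2 - ν) * pZ1 (pZ1 (pZ2 w)) t z1 L2 = 0)
    (τ : ℝ) :
    (∫ z1 in (0:ℝ)..L1, ∫ z2 in (0:ℝ)..L2,
      pT (plateDensity ρA D_E ν w p) τ z1 z2) = 0 := by
  have hXs := smooth_Xf hw ν
  have hYs := smooth_Yf hw ν
  have e1 : (∫ z1 in (0:ℝ)..L1, ∫ z2 in (0:ℝ)..L2,
      pT (plateDensity ρA D_E ν w p) τ z1 z2)
      = ∫ z1 in (0:ℝ)..L1, (D_E * (∫ z2 in (0:ℝ)..L2, pZ1 (Xf ν w) τ z1 z2)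
          + D_E * (∫ z2 in (0:ℝ)..L2, pZ2 (Yf ν w) τ z1 z2)) := by
    apply intervalIntegral.integral_congr
    intro z1 hz1
    rw [Set.uIcc_of_le hL1.le] at hz1
    dsimp only
    have einner : (∫ z2 in (0:ℝ)..L2, pT (plateDensity ρA D_E ν w p) τ z1 z2)
        = ∫ z2 in (0:ℝ)..L2, D_E * (pZ1 (Xf ν w) τ z1 z2 + pZ2 (Yf ν w) τ z1 z2) := by
      apply intervalIntegral.integral_congr
      intro z2 hz2
      rw [Set.uIcc_of_le hL2.le] at hz2
      exact claimB hw hp hρA hdyn ν τ hz1 hz2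
    rw [einner, intervalIntegral.integral_const_mul,
      intervalIntegral.integral_add
        ((contsl2 (smooth_pZ1 hXs) τ z1).intervalIntegrable 0 L2)
        ((contsl2 (smooth_pZ2 hYs) τ z1).intervalIntegrable 0 L2), mul_add]
  rw [e1]
  have cIA : Continuous fun z1 => ∫ z2 in (0:ℝ)..L2, pZ1 (Xf ν w) τ z1 z2 :=
    intervalIntegral.continuous_parametric_intervalIntegral_of_continuous'
      (f := fun z1 z2 => pZ1 (Xf ν w) τ z1 z2)
      ((continuous_U (smooth_pZ1 hXs)).comp
        (show Continuous fun q : ℝ × ℝ => ((τ, q.1, q.2) : ℝ × ℝ × ℝ) by fun_prop)) 0 L2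
  have cIB : Continuous fun z1 => ∫ z2 in (0:ℝ)..L2, pZ2 (Yf ν w) τ z1 z2 :=
    intervalIntegral.continuous_parametric_intervalIntegral_of_continuous'
      (f := fun z1 z2 => pZ2 (Yf ν w) τ z1 z2)
      ((continuous_U (smooth_pZ2 hYs)).comp
        (show Continuous fun q : ℝ × ℝ => ((τ, q.1, q.2) : ℝ × ℝ × ℝ) by fun_prop)) 0 L2
  rw [intervalIntegral.integral_add (by exact (continuous_const.mul cIA).intervalIntegrable 0 L1 :
        IntervalIntegrable (fun z1 => D_E * ∫ z2 in (0:ℝ)..L2, pZ1 (Xf ν w) τ z1 z2) volume 0 L1)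
      (by exact (continuous_const.mul cIB).intervalIntegrable 0 L1 :
        IntervalIntegrable (fun z1 => D_E * ∫ z2 in (0:ℝ)..L2, pZ2 (Yf ν w) τ z1 z2) volume 0 L1),
    intervalIntegral.integral_const_mul, intervalIntegral.integral_const_mul]
  have TX : (∫ z1 in (0:ℝ)..L1, ∫ z2 in (0:ℝ)..L2, pZ1 (Xf ν w) τ z1 z2) = 0 := by
    have sw : (∫ z1 in (0:ℝ)..L1, ∫ z2 in (0:ℝ)..L2, pZ1 (Xf ν w) τ z1 z2)
        = ∫ z2 in (0:ℝ)..L2, ∫ z1 in (0:ℝ)..L1, pZ1 (Xf ν w) τ z1 z2 :=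
      swapII (f := fun z1 z2 => pZ1 (Xf ν w) τ z1 z2)
        ((continuous_U (smooth_pZ1 hXs)).comp
        (show Continuous fun q : ℝ × ℝ => ((τ, q.1, q.2) : ℝ × ℝ × ℝ) by fun_prop)) 0 L1 0 L2
    rw [sw,
      intervalIntegral.integral_congr (fun z2 _ => FTC_Z1 hXs τ z2 0 L1),
      intervalIntegral.integral_sub ((contsl2 hXs τ L1).intervalIntegrable 0 L2)
        ((contsl2 hXs τ 0).intervalIntegrable 0 L2),
      int_X_right hw hbc hL2.le τ, int_X_left hw hbc hL2.le τ]
    simp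
  have TY : (∫ z1 in (0:ℝ)..L1, ∫ z2 in (0:ℝ)..L2, pZ2 (Yf ν w) τ z1 z2) = 0 := by
    rw [intervalIntegral.integral_congr (fun z1 _ => FTC_Z2 hYs τ z1 0 L2)]
    exact int_Y_edges hw hbc hshear hL1.le hL2.le τ
  rw [TX, TY]; ring

end Main
end Plate


/-- energy conservation for the unforced Kirchhoff–Love plate.
Under the clamped/free boundary conditions, zero bending moments on the
`z²`-edges, free-corner conditions, and additionally vanishing shear force
`Q₁ = D_E(∂₂³w + (2−ν)∂₁²∂₂w)` on both `z²`-edges, the total energy is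
constant in time. -/
theorem stmt7 (L1 L2 ρA D_E ν : ℝ) (hL1 : 0 < L1) (hL2 : 0 < L2)
    (hρA : 0 < ρA) (hDE : 0 < D_E)
    (w p : ℝ → ℝ → ℝ → ℝ) (hw : SmoothField w) (hp : SmoothField p)
    (hdyn : PlateDynamics L1 L2 ρA D_E w p)
    (hbc : PlateBC L1 L2 ν w)
    (hshear : ∀ t : ℝ, ∀ z1 ∈ Set.Icc (0:ℝ) L1,
      pZ2 (pZ2 (pZ2 w)) t z1 0 + (2 - ν) * pZ1 (pZ1 (pZ2 w)) t z1 0 = 0 ∧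
      pZ2 (pZ2 (pZ2 w)) t z1 L2 + (2 - ν) * pZ1 (pZ1 (pZ2 w)) t z1 L2 = 0) :
    ∀ t s : ℝ, plateEnergy L1 L2 ρA D_E ν w p t = plateEnergy L1 L2 ρA D_E ν w p s := by
  intro t s
  have hρ : ρA ≠ 0 := ne_of_gt hρA
  have hdens := Plate.smooth_density hw hp ρA D_E ν
  have key : plateEnergy L1 L2 ρA D_E ν w p t - plateEnergy L1 L2 ρA D_E ν w p s = 0 := by
    have hIt : IntervalIntegrable
        (fun z1 => ∫ z2 in (0:ℝ)..L2, plateDensity ρA D_E ν w p t z1 z2) volume 0 L1 :=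
      (intervalIntegral.continuous_parametric_intervalIntegral_of_continuous'
        (f := fun z1 z2 => plateDensity ρA D_E ν w p t z1 z2)
        ((Plate.continuous_U hdens).comp
          (show Continuous fun q : ℝ × ℝ => ((t, q.1, q.2) : ℝ × ℝ × ℝ) by fun_prop))
        0 L2).intervalIntegrable 0 L1
    have hIs : IntervalIntegrable
        (fun z1 => ∫ z2 in (0:ℝ)..L2, plateDensity ρA D_E ν w p s z1 z2) volume 0 L1 :=
      (intervalIntegral.continuous_parametric_intervalIntegral_of_continuous'
        (f := fun z1 z2 => plateDensity ρA D_E ν w p s z1 z2)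
        ((Plate.continuous_U hdens).comp
          (show Continuous fun q : ℝ × ℝ => ((s, q.1, q.2) : ℝ × ℝ × ℝ) by fun_prop))
        0 L2).intervalIntegrable 0 L1
    have contP : Continuous (Function.uncurry fun z1 τ : ℝ =>
        ∫ z2 in (0:ℝ)..L2, pT (plateDensity ρA D_E ν w p) τ z1 z2) :=
      intervalIntegral.continuous_parametric_intervalIntegral_of_continuous'
        (f := fun (x : ℝ × ℝ) z2 => pT (plateDensity ρA D_E ν w p) x.2 x.1 z2)
        ((Plate.continuous_U (Plate.smooth_pT hdens)).comp
          (show Continuous fun r : (ℝ × ℝ) × ℝ => ((r.1.2, r.1.1, r.2) : ℝ × ℝ × ℝ) by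
            fun_prop)) 0 L2
    simp only [plateEnergy]
    rw [← intervalIntegral.integral_sub hIt hIs]
    have e1 : Set.EqOn
        (fun z1 => (∫ z2 in (0:ℝ)..L2, plateDensity ρA D_E ν w p t z1 z2)
          - ∫ z2 in (0:ℝ)..L2, plateDensity ρA D_E ν w p s z1 z2)
        (fun z1 => ∫ τ in s..t, ∫ z2 in (0:ℝ)..L2,
          pT (plateDensity ρA D_E ν w p) τ z1 z2)
        (Set.uIcc (0:ℝ) L1) := by
      intro z1 _
      dsimp only
      rw [← intervalIntegral.integral_sub
        ((Plate.contsl2 hdens t z1).intervalIntegrable 0 L2)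
        ((Plate.contsl2 hdens s z1).intervalIntegrable 0 L2),
        intervalIntegral.integral_congr
          (fun z2 _ => (Plate.FTC_T hdens z1 z2 s t).symm : Set.EqOn _ _ (Set.uIcc (0:ℝ) L2))]
      exact Plate.swapII (f := fun z2 τ => pT (plateDensity ρA D_E ν w p) τ z1 z2)
        ((Plate.continuous_U (Plate.smooth_pT hdens)).comp
          (show Continuous fun q : ℝ × ℝ => ((q.2, z1, q.1) : ℝ × ℝ × ℝ) by fun_prop)) 0 L2 s t
    rw [intervalIntegral.integral_congr e1]
    have sw2 : (∫ z1 in (0:ℝ)..L1, ∫ τ in s..t, ∫ z2 in (0:ℝ)..L2,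
        pT (plateDensity ρA D_E ν w p) τ z1 z2)
        = ∫ τ in s..t, ∫ z1 in (0:ℝ)..L1, ∫ z2 in (0:ℝ)..L2,
          pT (plateDensity ρA D_E ν w p) τ z1 z2 :=
      Plate.swapII contP 0 L1 s t
    rw [sw2,
      intervalIntegral.integral_congr
        (fun τ _ => Plate.Gzero hw hp hL1 hL2 hρ hdyn hbc hshear τ)]
    simp
  linarith


end
end

section
/- Let L₁, L₂ > 0, B = [0,L₁]×[0,L₂], ρA, D_E > 0, ν ∈ ℝ. Let Λ₁, Λ₂ : [0,L₁] → ℝ be continuous. Let constants c₁, c₂, a₁, a₂, M₃₃, M₃₄, M₄₄, J₃₄, R₃₃, R₃₄, R₄₄, G₃₁, G₃₂, G₄₁, G₄₂ ∈ ℝ and define the controller Hamiltonian H_c(x_c) = (c₁/2)(x_c¹ − a₁)² + (c₂/2)(x_c² − a₂)² + (1/2)(M₃₃(x_c³)² + 2M₃₄ x_c³ x_c⁴ + M₄₄(x_c⁴)²). Suppose w, p : ℝ × ℝ² → ℝ are smooth with ∂ₜw = p/(ρA), ∂ₜp = −D_E(∂₁⁴w + 2∂₁²∂₂²w + ∂₂⁴w)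 on ℝ × B, and x_c : ℝ → ℝ⁴ is differentiable, coupled as follows for all t: boundary conditions w = ∂₁w = 0 on the edge z¹ = 0; ∂₁³w + (2−ν)∂₁∂₂²w = 0 and ∂₁²w + ν∂₂²w = 0 on the edge z¹ = L₁; ∂₂²w + ν∂₁²w = 0 on both edges z² ∈ {0,L₂}; ∂₁∂₂w(L₁,0,t) = ∂₁∂₂w(L₁,L₂,t) = 0; actuation D_E(∂₂³w + (2−ν)∂₁²∂₂w)(z¹,0,t) = Λ₁(z¹)u¹(t) and D_E(∂₂³w + (2−ν)∂₁²∂₂w)(z¹,L₂,t) = −Λ₂(z¹)u²(t); controller inputs u_c¹(t) = ∫₀^{L₁} Λ₁ ∂ₜw(·,0,t), u_c²(t) = ∫₀^{L₁} Λ₂ ∂ₜw(·,L₂,t); controller dynamics ẋ_c¹ = u_c¹, ẋ_c² = u_c², ẋ_c³ = −R₃₃ χ₃ + (J₃₄−R₃₄) χ₄ + G₃₁ u_c¹ + G₃₂ u_c², ẋ_c⁴ = −(J₃₄+R₃₄) χ₃ − R₄₄ χ₄ + G₄₁ u_c¹ + G₄₂ u_c², where χ₃ = ∂H_c/∂x_c³,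 χ₄ = ∂H_c/∂x_c⁴; and feedback u¹ = −(∂H_c/∂x_c¹ + G₃₁χ₃ + G₄₁χ₄), u² = −(∂H_c/∂x_c² + G₃₂χ₃ + G₄₂χ₄). Define the closed-loop Hamiltonian 𝓗_cl(t) = ∫_B [ p²/(2ρA) + (D_E/2)((∂₁²w)² + (∂₂²w)² + 2ν ∂₁²w ∂₂²w + 2(1−ν)(∂₁∂₂w)²) ] dz + H_c(x_c(t)). Then for all t: d𝓗_cl/dt = −(R₃₃ χ₃² + 2R₃₄ χ₃χ₄ + R₄₄ χ₄²); in particular, if the matrix [[R₃₃, R₃₄],[R₃₄, R₄₄]] is positive semi-definite, then d𝓗_cl/dt ≤ 0. -/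
open MeasureTheory intervalIntegral

noncomputable section

/-- The controller Hamiltonian
`H_c(x) = (c₁/2)(x₁−a₁)² + (c₂/2)(x₂−a₂)² + ½(M₃₃x₃² + 2M₃₄x₃x₄ + M₄₄x₄²)`. -/
def Hc (c1 c2 a1 a2 M33 M34 M44 : ℝ) (x1 x2 x3 x4 : ℝ) : ℝ :=
  c1 / 2 * (x1 - a1) ^ 2 + c2 / 2 * (x2 - a2) ^ 2
    + 1 / 2 * (M33 * x3 ^ 2 + 2 * M34 * x3 * x4 + M44 * x4 ^ 2)

namespace EC12

/-- uncurried version of a field -/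
def unc (u : ℝ → ℝ → ℝ → ℝ) : ℝ × ℝ × ℝ → ℝ := fun q => u q.1 q.2.1 q.2.2

variable {u v : ℝ → ℝ → ℝ → ℝ} {t z1 z2 : ℝ}

lemma top1 : ((⊤ : ℕ∞) : WithTop ℕ∞) ≠ 0 := by
  simp

lemma topp1 : ((⊤ : ℕ∞) : WithTop ℕ∞) + 1 ≤ ((⊤ : ℕ∞) : WithTop ℕ∞) := by
  exact_mod_cast (le_top : (⊤:ℕ∞) + 1 ≤ ⊤)

lemma sfCont (hu : SmoothField u) : Continuous (unc u) := hu.continuous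

lemma cont12 (hu : SmoothField u) (t : ℝ) : Continuous (fun q : ℝ × ℝ => u t q.1 q.2) :=
  (sfCont hu).comp (continuous_const.prodMk continuous_id)

lemma cont_s1 (hu : SmoothField u) (t b : ℝ) : Continuous (fun a => u t a b) :=
  (sfCont hu).comp (continuous_const.prodMk (continuous_id.prodMk continuous_const))

lemma cont_s2 (hu : SmoothField u) (t a : ℝ) : Continuous (fun b => u t a b) :=
  (sfCont hu).comp (continuous_const.prodMk (continuous_const.prodMk continuous_id))

lemma diffAt_T (hu : SmoothField u) : DifferentiableAt ℝ (fun s => u s z1 z2) t :=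
  ((hu.differentiable top1).differentiableAt (x := (t, z1, z2))).comp (f := fun s => (s, z1, z2)) t
    (differentiableAt_fun_id.prodMk (differentiableAt_const (z1, z2)))

lemma diffAt_Z1 (hu : SmoothField u) : DifferentiableAt ℝ (fun s => u t s z2) z1 :=
  ((hu.differentiable top1).differentiableAt (x := (t, z1, z2))).comp (f := fun s => (t, s, z2)) z1
    ((differentiableAt_const t).prodMk (differentiableAt_fun_id.prodMk (differentiableAt_const z2)))

lemma diffAt_Z2 (hu : SmoothField u) : DifferentiableAt ℝ (fun s => u t z1 s) z2 :=
  ((hu.differentiable top1).differentiableAt (x := (t, z1, z2))).comp (f := fun s => (t, z1, s)) z2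
    ((differentiableAt_const t).prodMk ((differentiableAt_const z1).prodMk differentiableAt_fun_id))

lemma hasDerivAt_T (hu : SmoothField u) (t z1 z2 : ℝ) :
    HasDerivAt (fun s => u s z1 z2) (pT u t z1 z2) t := (diffAt_T hu).hasDerivAt

lemma hasDerivAt_Z1 (hu : SmoothField u) (t z1 z2 : ℝ) :
    HasDerivAt (fun s => u t s z2) (pZ1 u t z1 z2) z1 := (diffAt_Z1 hu).hasDerivAt

lemma hasDerivAt_Z2 (hu : SmoothField u) (t z1 z2 : ℝ) :
    HasDerivAt (fun s => u t z1 s) (pZ2 u t z1 z2) z2 := (diffAt_Z2 hu).hasDerivAt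

lemma pT_eq (hu : SmoothField u) (t z1 z2 : ℝ) :
    pT u t z1 z2 = fderiv ℝ (unc u) (t, z1, z2) (1, 0, 0) := by
  have hι : HasDerivAt (fun s : ℝ => ((s, z1, z2) : ℝ × ℝ × ℝ)) ((1 : ℝ), (0 : ℝ), (0 : ℝ)) t :=
    (hasDerivAt_id t).prodMk (hasDerivAt_const t (z1, z2))
  exact (((hu.differentiable top1).differentiableAt.hasFDerivAt).comp_hasDerivAt t hι).deriv

lemma pZ1_eq (hu : SmoothField u) (t z1 z2 : ℝ) :
    pZ1 u t z1 z2 = fderiv ℝ (unc u) (t, z1, z2) (0, 1, 0) := by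
  have hι : HasDerivAt (fun s : ℝ => ((t, s, z2) : ℝ × ℝ × ℝ)) ((0 : ℝ), (1 : ℝ), (0 : ℝ)) z1 :=
    (hasDerivAt_const z1 t).prodMk ((hasDerivAt_id z1).prodMk (hasDerivAt_const z1 z2))
  exact (((hu.differentiable top1).differentiableAt.hasFDerivAt).comp_hasDerivAt z1 hι).deriv

lemma pZ2_eq (hu : SmoothField u) (t z1 z2 : ℝ) :
    pZ2 u t z1 z2 = fderiv ℝ (unc u) (t, z1, z2) (0, 0, 1) := by
  have hι : HasDerivAt (fun s : ℝ => ((t, z1, s) : ℝ × ℝ × ℝ)) ((0 : ℝ), (0 : ℝ), (1 : ℝ)) z2 :=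
    (hasDerivAt_const z2 t).prodMk ((hasDerivAt_const z2 z1).prodMk (hasDerivAt_id z2))
  exact (((hu.differentiable top1).differentiableAt.hasFDerivAt).comp_hasDerivAt z2 hι).deriv

lemma smooth_dir (hu : SmoothField u) (v : ℝ × ℝ × ℝ) :
    ContDiff ℝ (⊤ : ℕ∞) (fun q => fderiv ℝ (unc u) q v) :=
  (hu.fderiv_right (m := ((⊤:ℕ∞) : WithTop ℕ∞)) topp1).clm_apply contDiff_const

lemma sfT (hu : SmoothField u) : SmoothField (_root_.pT u) := by
  have : (fun q : ℝ × ℝ × ℝ => _root_.pT u q.1 q.2.1 q.2.2)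
      = fun q => fderiv ℝ (unc u) q (1, 0, 0) := funext fun q => pT_eq hu q.1 q.2.1 q.2.2
  unfold SmoothField
  rw [this]; exact smooth_dir hu _

lemma sfZ1 (hu : SmoothField u) : SmoothField (_root_.pZ1 u) := by
  have : (fun q : ℝ × ℝ × ℝ => _root_.pZ1 u q.1 q.2.1 q.2.2)
      = fun q => fderiv ℝ (unc u) q (0, 1, 0) := funext fun q => pZ1_eq hu q.1 q.2.1 q.2.2
  unfold SmoothField
  rw [this]; exact smooth_dir hu _

lemma sfZ2 (hu : SmoothField u) : SmoothField (_root_.pZ2 u) := by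
  have : (fun q : ℝ × ℝ × ℝ => _root_.pZ2 u q.1 q.2.1 q.2.2)
      = fun q => fderiv ℝ (unc u) q (0, 0, 1) := funext fun q => pZ2_eq hu q.1 q.2.1 q.2.2
  unfold SmoothField
  rw [this]; exact smooth_dir hu _

lemma dir_comm (hu : SmoothField u) (q : ℝ × ℝ × ℝ) (a b : ℝ × ℝ × ℝ) :
    fderiv ℝ (fun x => fderiv ℝ (unc u) x a) q b
      = fderiv ℝ (fun x => fderiv ℝ (unc u) x b) q a := by
  have hdU : Differentiable ℝ (unc u) := hu.differentiable top1
  have hdU2 : DifferentiableAt ℝ (fderiv ℝ (unc u)) q :=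
    ((hu.fderiv_right (m := ((⊤:ℕ∞) : WithTop ℕ∞)) topp1).differentiable top1) q
  have key : ∀ z : ℝ × ℝ × ℝ,
      HasFDerivAt (fun x => fderiv ℝ (unc u) x z)
        ((ContinuousLinearMap.apply ℝ ℝ z).comp (fderiv ℝ (fderiv ℝ (unc u)) q)) q :=
    fun z => (ContinuousLinearMap.apply ℝ ℝ z).hasFDerivAt.comp q hdU2.hasFDerivAt
  rw [(key a).fderiv, (key b).fderiv]
  simp only [ContinuousLinearMap.coe_comp', Function.comp_apply,
    ContinuousLinearMap.apply_apply]
  exact second_derivative_symmetric (fun y => (hdU y).hasFDerivAt) hdU2.hasFDerivAt b a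

lemma unc_pdir₁ (hu : SmoothField u) :
    unc (_root_.pZ1 u) = fun q => fderiv ℝ (unc u) q (0, 1, 0) :=
  funext fun q => pZ1_eq hu q.1 q.2.1 q.2.2

lemma unc_pdir₂ (hu : SmoothField u) :
    unc (_root_.pZ2 u) = fun q => fderiv ℝ (unc u) q (0, 0, 1) :=
  funext fun q => pZ2_eq hu q.1 q.2.1 q.2.2

lemma unc_pdirT (hu : SmoothField u) :
    unc (_root_.pT u) = fun q => fderiv ℝ (unc u) q (1, 0, 0) :=
  funext fun q => pT_eq hu q.1 q.2.1 q.2.2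

lemma comm21 (hu : SmoothField u) : pZ2 (pZ1 u) = pZ1 (pZ2 u) := by
  funext t z1 z2
  rw [pZ2_eq (sfZ1 hu), pZ1_eq (sfZ2 hu), unc_pdir₁ hu, unc_pdir₂ hu]
  exact dir_comm hu _ _ _

lemma commT1 (hu : SmoothField u) : pT (pZ1 u) = pZ1 (pT u) := by
  funext t z1 z2
  rw [pT_eq (sfZ1 hu), pZ1_eq (sfT hu), unc_pdir₁ hu, unc_pdirT hu]
  exact dir_comm hu _ _ _

lemma commT2 (hu : SmoothField u) : pT (pZ2 u) = pZ2 (pT u) := by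
  funext t z1 z2
  rw [pT_eq (sfZ2 hu), pZ2_eq (sfT hu), unc_pdir₂ hu, unc_pdirT hu]
  exact dir_comm hu _ _ _

end EC12
namespace EC12

variable {u w p : ℝ → ℝ → ℝ → ℝ} {t z1 z2 ρA D_E ν : ℝ}

/-- corner flux field `∂₁∂₂w · ∂ₜw` -/
def F0 (w : ℝ → ℝ → ℝ → ℝ) : ℝ → ℝ → ℝ → ℝ := fun t a b =>
  pZ1 (pZ2 w) t a b * pT w t a b

/-- flux in the `z¹` direction -/
def F1 (ν : ℝ) (w : ℝ → ℝ → ℝ → ℝ) : ℝ → ℝ → ℝ → ℝ := fun t a b =>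
  (pZ1 (pZ1 w) t a b + ν * pZ2 (pZ2 w) t a b) * pZ1 (pT w) t a b
    + (1 - ν) * (pZ1 (pZ2 w) t a b * pZ2 (pT w) t a b)
    - (pZ1 (pZ1 (pZ1 w)) t a b + pZ1 (pZ2 (pZ2 w)) t a b) * pT w t a b

/-- flux in the `z²` direction -/
def F2 (ν : ℝ) (w : ℝ → ℝ → ℝ → ℝ) : ℝ → ℝ → ℝ → ℝ := fun t a b =>
  (pZ2 (pZ2 w) t a b + ν * pZ1 (pZ1 w) t a b) * pZ2 (pT w) t a b
    + (1 - ν) * (pZ1 (pZ2 w) t a b * pZ1 (pT w) t a b)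
    - (pZ2 (pZ2 (pZ2 w)) t a b + pZ1 (pZ1 (pZ2 w)) t a b) * pT w t a b

lemma sfF0 (hw : SmoothField w) : SmoothField (F0 w) :=
  ContDiff.mul (sfZ1 (sfZ2 hw)) (sfT hw)

lemma sfF1 (hw : SmoothField w) : SmoothField (F1 ν w) :=
  ContDiff.sub
    (ContDiff.add
      (ContDiff.mul (ContDiff.add (sfZ1 (sfZ1 hw)) (contDiff_const.mul (sfZ2 (sfZ2 hw))))
        (sfZ1 (sfT hw)))
      (contDiff_const.mul (ContDiff.mul (sfZ1 (sfZ2 hw)) (sfZ2 (sfT hw)))))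
    (ContDiff.mul (ContDiff.add (sfZ1 (sfZ1 (sfZ1 hw))) (sfZ1 (sfZ2 (sfZ2 hw)))) (sfT hw))

lemma sfF2 (hw : SmoothField w) : SmoothField (F2 ν w) :=
  ContDiff.sub
    (ContDiff.add
      (ContDiff.mul (ContDiff.add (sfZ2 (sfZ2 hw)) (contDiff_const.mul (sfZ1 (sfZ1 hw))))
        (sfZ2 (sfT hw)))
      (contDiff_const.mul (ContDiff.mul (sfZ1 (sfZ2 hw)) (sfZ1 (sfT hw)))))
    (ContDiff.mul (ContDiff.add (sfZ2 (sfZ2 (sfZ2 hw))) (sfZ1 (sfZ1 (sfZ2 hw)))) (sfT hw))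

lemma sfDens (hw : SmoothField w) (hp : SmoothField p) :
    SmoothField (plateDensity ρA D_E ν w p) :=
  ContDiff.add (ContDiff.div_const (ContDiff.pow hp 2) _)
    (contDiff_const.mul
      (ContDiff.add
        (ContDiff.add
          (ContDiff.add (ContDiff.pow (sfZ1 (sfZ1 hw)) 2) (ContDiff.pow (sfZ2 (sfZ2 hw)) 2))
          (ContDiff.mul (contDiff_const.mul (sfZ1 (sfZ1 hw))) (sfZ2 (sfZ2 hw))))
        (contDiff_const.mul (ContDiff.pow (sfZ1 (sfZ2 hw)) 2))))

lemma pZ1_F0 (hw : SmoothField w) (t a b : ℝ) :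
    pZ1 (F0 w) t a b
      = pZ1 (pZ1 (pZ2 w)) t a b * pT w t a b + pZ1 (pZ2 w) t a b * pZ1 (pT w) t a b :=
  ((hasDerivAt_Z1 (sfZ1 (sfZ2 hw)) t a b).mul (hasDerivAt_Z1 (sfT hw) t a b)).deriv

lemma pZ2_F0 (hw : SmoothField w) (t a b : ℝ) :
    pZ2 (F0 w) t a b
      = pZ1 (pZ2 (pZ2 w)) t a b * pT w t a b + pZ1 (pZ2 w) t a b * pZ2 (pT w) t a b :=
  ((hasDerivAt_Z2 (sfZ1 (sfZ2 hw)) t a b).mul (hasDerivAt_Z2 (sfT hw) t a b)).deriv.trans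
    (by rw [comm21 (sfZ2 hw)])

lemma pZ1_F1 (hw : SmoothField w) (ν : ℝ) (t a b : ℝ) :
    pZ1 (F1 ν w) t a b
      = (pZ1 (pZ1 (pZ1 w)) t a b + ν * pZ1 (pZ2 (pZ2 w)) t a b) * pZ1 (pT w) t a b
        + (pZ1 (pZ1 w) t a b + ν * pZ2 (pZ2 w) t a b) * pZ1 (pZ1 (pT w)) t a b
        + (1 - ν) * (pZ1 (pZ1 (pZ2 w)) t a b * pZ2 (pT w) t a b
            + pZ1 (pZ2 w) t a b * pZ1 (pZ2 (pT w)) t a b)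
        - ((pZ1 (pZ1 (pZ1 (pZ1 w))) t a b + pZ1 (pZ1 (pZ2 (pZ2 w))) t a b) * pT w t a b
            + (pZ1 (pZ1 (pZ1 w)) t a b + pZ1 (pZ2 (pZ2 w)) t a b) * pZ1 (pT w) t a b) := by
  have h := ((((hasDerivAt_Z1 (sfZ1 (sfZ1 hw)) t a b).add
      ((hasDerivAt_Z1 (sfZ2 (sfZ2 hw)) t a b).const_mul ν)).mul
      (hasDerivAt_Z1 (sfZ1 (sfT hw)) t a b)).add
      (((hasDerivAt_Z1 (sfZ1 (sfZ2 hw)) t a b).mul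
        (hasDerivAt_Z1 (sfZ2 (sfT hw)) t a b)).const_mul (1 - ν))).sub
      (((hasDerivAt_Z1 (sfZ1 (sfZ1 (sfZ1 hw))) t a b).add
        (hasDerivAt_Z1 (sfZ1 (sfZ2 (sfZ2 hw))) t a b)).mul (hasDerivAt_Z1 (sfT hw) t a b))
  exact h.deriv.trans (by simp only [Pi.add_apply])

lemma pZ2_F2 (hw : SmoothField w) (ν : ℝ) (t a b : ℝ) :
    pZ2 (F2 ν w) t a b
      = (pZ2 (pZ2 (pZ2 w)) t a b + ν * pZ1 (pZ1 (pZ2 w)) t a b) * pZ2 (pT w) t a b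
        + (pZ2 (pZ2 w) t a b + ν * pZ1 (pZ1 w) t a b) * pZ2 (pZ2 (pT w)) t a b
        + (1 - ν) * (pZ1 (pZ2 (pZ2 w)) t a b * pZ1 (pT w) t a b
            + pZ1 (pZ2 w) t a b * pZ1 (pZ2 (pT w)) t a b)
        - ((pZ2 (pZ2 (pZ2 (pZ2 w))) t a b + pZ1 (pZ1 (pZ2 (pZ2 w))) t a b) * pT w t a b
            + (pZ2 (pZ2 (pZ2 w)) t a b + pZ1 (pZ1 (pZ2 w)) t a b) * pZ2 (pT w) t a b) := by
  have h := ((((hasDerivAt_Z2 (sfZ2 (sfZ2 hw)) t a b).add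
      ((hasDerivAt_Z2 (sfZ1 (sfZ1 hw)) t a b).const_mul ν)).mul
      (hasDerivAt_Z2 (sfZ2 (sfT hw)) t a b)).add
      (((hasDerivAt_Z2 (sfZ1 (sfZ2 hw)) t a b).mul
        (hasDerivAt_Z2 (sfZ1 (sfT hw)) t a b)).const_mul (1 - ν))).sub
      (((hasDerivAt_Z2 (sfZ2 (sfZ2 (sfZ2 hw))) t a b).add
        (hasDerivAt_Z2 (sfZ1 (sfZ1 (sfZ2 hw))) t a b)).mul (hasDerivAt_Z2 (sfT hw) t a b))
  refine h.deriv.trans ?_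
  rw [comm21 (sfZ1 (sfZ2 hw)), comm21 (sfZ1 hw), comm21 (sfZ2 hw), comm21 (sfT hw), comm21 hw]
  simp only [Pi.add_apply]

lemma pT_density (hρA : ρA ≠ 0) (hw : SmoothField w) (hp : SmoothField p) (t a b : ℝ)
    (hdw : pT w t a b = p t a b / ρA) (hdp : pT p t a b = -(D_E * biharm w t a b)) :
    pT (plateDensity ρA D_E ν w p) t a b
      = D_E * (pZ1 (F1 ν w) t a b + pZ2 (F2 ν w) t a b) := by
  have hD := (((hasDerivAt_T hp t a b).pow 2).div_const (2 * ρA)).add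
    ((((((hasDerivAt_T (sfZ1 (sfZ1 hw)) t a b).pow 2).add
          ((hasDerivAt_T (sfZ2 (sfZ2 hw)) t a b).pow 2)).add
        (((hasDerivAt_T (sfZ1 (sfZ1 hw)) t a b).const_mul (2 * ν)).mul
          (hasDerivAt_T (sfZ2 (sfZ2 hw)) t a b))).add
      (((hasDerivAt_T (sfZ1 (sfZ2 hw)) t a b).pow 2).const_mul (2 * (1 - ν)))).const_mul
      (D_E / 2))
  have e1 : pT (plateDensity ρA D_E ν w p) t a b = _ :=
    HasDerivAt.deriv (f := fun s => plateDensity ρA D_E ν w p s a b) hD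
  rw [e1, pZ1_F1 hw ν t a b, pZ2_F2 hw ν t a b]
  rw [commT1 (sfZ1 hw), commT2 (sfZ2 hw), commT1 (sfZ2 hw), commT1 hw, commT2 hw]
  have hpv : p t a b = ρA * pT w t a b := by rw [hdw]; field_simp
  rw [hpv, hdp]
  simp only [biharm]
  field_simp
  ring

lemma int_pZ1 (hu : SmoothField u) (t b x y : ℝ) :
    ∫ a in x..y, pZ1 u t a b = u t y b - u t x b := by
  have hd : ∀ a ∈ Set.uIcc x y, DifferentiableAt ℝ (fun s => u t s b) a := fun a _ => diffAt_Z1 hu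
  have hint : IntervalIntegrable (deriv fun s => u t s b) MeasureTheory.volume x y :=
    (cont_s1 (sfZ1 hu) t b).intervalIntegrable x y
  exact intervalIntegral.integral_deriv_eq_sub hd hint

lemma int_pZ2 (hu : SmoothField u) (t a x y : ℝ) :
    ∫ b in x..y, pZ2 u t a b = u t a y - u t a x := by
  have hd : ∀ b ∈ Set.uIcc x y, DifferentiableAt ℝ (fun s => u t a s) b := fun b _ => diffAt_Z2 hu
  have hint : IntervalIntegrable (deriv fun s => u t a s) MeasureTheory.volume x y :=
    (cont_s2 (sfZ2 hu) t a).intervalIntegrable x y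
  exact intervalIntegral.integral_deriv_eq_sub hd hint

lemma swapInt {L1 L2 : ℝ} (h1 : 0 ≤ L1) (h2 : 0 ≤ L2) (f : ℝ → ℝ → ℝ)
    (hf : Continuous fun q : ℝ × ℝ => f q.1 q.2) :
    ∫ a in (0:ℝ)..L1, ∫ b in (0:ℝ)..L2, f a b
      = ∫ b in (0:ℝ)..L2, ∫ a in (0:ℝ)..L1, f a b := by
  simp only [intervalIntegral.integral_of_le h1, intervalIntegral.integral_of_le h2]
  apply MeasureTheory.integral_integral_swap
  rw [MeasureTheory.Measure.prod_restrict, ← MeasureTheory.Measure.volume_eq_prod ℝ ℝ]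
  exact (hf.continuousOn.integrableOn_compact (isCompact_Icc.prod isCompact_Icc)).mono_set
    (Set.prod_mono Set.Ioc_subset_Icc_self Set.Ioc_subset_Icc_self)

lemma hasDerivAt_nested (L1 L2 : ℝ) {g : ℝ → ℝ → ℝ → ℝ} (hg : SmoothField g) (t : ℝ) :
    HasDerivAt (fun τ => ∫ a in (0:ℝ)..L1, ∫ b in (0:ℝ)..L2, g τ a b)
      (∫ a in (0:ℝ)..L1, ∫ b in (0:ℝ)..L2, pT g t a b) t := by
  obtain ⟨C, hC⟩ :
      ∃ C, ∀ q ∈ Set.Icc (t - 2) (t + 2) ×ˢ Set.uIcc (0:ℝ) L1 ×ˢ Set.uIcc (0:ℝ) L2,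
        ‖unc (pT g) q‖ ≤ C :=
    (isCompact_Icc.prod (isCompact_uIcc.prod isCompact_uIcc)).exists_bound_of_continuousOn
      (sfCont (sfT hg)).continuousOn
  have hmem : ∀ x τ : ℝ, x ∈ Metric.ball τ 1 → τ ∈ Metric.ball t 1 → x ∈ Set.Icc (t - 2) (t + 2) := by
    intro x τ hx hτ
    have h1 : |x - τ| < 1 := by simpa [Real.dist_eq] using hx
    have h2 : |τ - t| < 1 := by simpa [Real.dist_eq] using hτ
    have h1' := abs_lt.mp h1
    have h2' := abs_lt.mp h2
    constructor <;> nlinarith [h1'.1, h1'.2, h2'.1, h2'.2]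
  have hinner : ∀ τ ∈ Metric.ball t 1, ∀ a ∈ Set.uIcc (0:ℝ) L1,
      HasDerivAt (fun x => ∫ b in (0:ℝ)..L2, g x a b) (∫ b in (0:ℝ)..L2, pT g τ a b) τ := by
    intro τ hτ a ha
    refine (intervalIntegral.hasDerivAt_integral_of_dominated_loc_of_deriv_le
      (F := fun x b => g x a b) (F' := fun x b => pT g x a b) (x₀ := τ)
      (bound := fun _ => |C|) (Metric.ball_mem_nhds _ one_pos) ?_ ?_ ?_ ?_ ?_ ?_).2
    · exact Filter.Eventually.of_forall fun x => (cont_s2 hg x a).aestronglyMeasurable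
    · exact (cont_s2 hg τ a).intervalIntegrable _ _
    · exact (cont_s2 (sfT hg) τ a).aestronglyMeasurable
    · refine Filter.Eventually.of_forall fun b hb x hx => ?_
      exact le_trans (hC (x, a, b) ⟨hmem x τ hx hτ, ha, Set.uIoc_subset_uIcc hb⟩) (le_abs_self C)
    · exact intervalIntegrable_const
    · exact Filter.Eventually.of_forall fun b hb x hx => hasDerivAt_T hg x a b
  refine (intervalIntegral.hasDerivAt_integral_of_dominated_loc_of_deriv_le
    (F := fun x a => ∫ b in (0:ℝ)..L2, g x a b)
    (F' := fun x a => ∫ b in (0:ℝ)..L2, pT g x a b) (x₀ := t)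
    (bound := fun _ => |C| * |L2|) (Metric.ball_mem_nhds _ one_pos) ?_ ?_ ?_ ?_ ?_ ?_).2
  · refine Filter.Eventually.of_forall fun x => Continuous.aestronglyMeasurable ?_
    exact intervalIntegral.continuous_parametric_intervalIntegral_of_continuous'
      (f := fun a b => g x a b) (cont12 hg x) 0 L2
  · exact (intervalIntegral.continuous_parametric_intervalIntegral_of_continuous'
      (f := fun a b => g t a b) (cont12 hg t) 0 L2).intervalIntegrable _ _
  · exact (intervalIntegral.continuous_parametric_intervalIntegral_of_continuous'
      (f := fun a b => pT g t a b) (cont12 (sfT hg) t) 0 L2).aestronglyMeasurable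
  · refine Filter.Eventually.of_forall fun a ha x hx => ?_
    have := intervalIntegral.norm_integral_le_of_norm_le_const
      (C := |C|) (f := fun b => pT g x a b) (a := 0) (b := L2) ?_
    · simpa using this
    · intro b hb
      exact le_trans
        (hC (x, a, b) ⟨hmem x t hx (Metric.mem_ball_self one_pos), Set.uIoc_subset_uIcc ha,
          Set.uIoc_subset_uIcc hb⟩) (le_abs_self C)
  · exact intervalIntegrable_const
  · exact Filter.Eventually.of_forall fun a ha x hx =>
      hinner x hx a (Set.uIoc_subset_uIcc ha)

end EC12
namespace EC12

lemma congr_d {f : ℝ → ℝ} {d d' t : ℝ} (h : HasDerivAt f d t) (e : d = d') :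
    HasDerivAt f d' t := e ▸ h

end EC12
/-- energy-Casimir boundary control of the Kirchhoff–Love plate.
For the closed loop of the boundary-actuated plate and the four-dimensional
port-Hamiltonian controller, the closed-loop Hamiltonian satisfies
`d𝓗_cl/dt = −(R₃₃χ₃² + 2R₃₄χ₃χ₄ + R₄₄χ₄²)`; in particular it is nonincreasing
whenever the resistive matrix `[[R₃₃,R₃₄],[R₃₄,R₄₄]]` is positive semi-definite. -/
theorem stmt12 (L1 L2 ρA D_E ν : ℝ) (hL1 : 0 < L1) (hL2 : 0 < L2)
    (hρA : 0 < ρA) (hDE : 0 < D_E)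
    (Λ1 Λ2 : ℝ → ℝ) (hΛ1 : ContinuousOn Λ1 (Set.Icc 0 L1))
    (hΛ2 : ContinuousOn Λ2 (Set.Icc 0 L1))
    (c1 c2 a1 a2 M33 M34 M44 J34 R33 R34 R44 G31 G32 G41 G42 : ℝ)
    (w p : ℝ → ℝ → ℝ → ℝ) (hw : SmoothField w) (hp : SmoothField p)
    (hdyn : PlateDynamics L1 L2 ρA D_E w p)
    (hbc : PlateBC L1 L2 ν w)
    (xc1 xc2 xc3 xc4 : ℝ → ℝ)
    (u1 u2 uc1 uc2 χ3 χ4 : ℝ → ℝ)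
    -- outputs of the controller Hamiltonian
    (hχ3 : ∀ t, χ3 t =
      deriv (fun s => Hc c1 c2 a1 a2 M33 M34 M44 (xc1 t) (xc2 t) s (xc4 t)) (xc3 t))
    (hχ4 : ∀ t, χ4 t =
      deriv (fun s => Hc c1 c2 a1 a2 M33 M34 M44 (xc1 t) (xc2 t) (xc3 t) s) (xc4 t))
    -- boundary actuation through the shear-force ports
    (hact : ∀ t : ℝ, ∀ z1 ∈ Set.Icc (0:ℝ) L1,
      Q1 D_E ν w t z1 0 = Λ1 z1 * u1 t ∧
      Q1 D_E ν w t z1 L2 = -(Λ2 z1 * u2 t))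
    -- controller inputs: collocated boundary outputs of the plate
    (huc1 : ∀ t, uc1 t = ∫ z1 in (0:ℝ)..L1, Λ1 z1 * pT w t z1 0)
    (huc2 : ∀ t, uc2 t = ∫ z1 in (0:ℝ)..L1, Λ2 z1 * pT w t z1 L2)
    -- controller dynamics
    (hxc1 : ∀ t, HasDerivAt xc1 (uc1 t) t)
    (hxc2 : ∀ t, HasDerivAt xc2 (uc2 t) t)
    (hxc3 : ∀ t, HasDerivAt xc3
      (-(R33 * χ3 t) + (J34 - R34) * χ4 t + G31 * uc1 t + G32 * uc2 t) t)
    (hxc4 : ∀ t, HasDerivAt xc4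
      (-((J34 + R34) * χ3 t) - R44 * χ4 t + G41 * uc1 t + G42 * uc2 t) t)
    -- feedback law
    (hu1 : ∀ t, u1 t =
      -((deriv (fun s => Hc c1 c2 a1 a2 M33 M34 M44 s (xc2 t) (xc3 t) (xc4 t)) (xc1 t))
        + G31 * χ3 t + G41 * χ4 t))
    (hu2 : ∀ t, u2 t =
      -((deriv (fun s => Hc c1 c2 a1 a2 M33 M34 M44 (xc1 t) s (xc3 t) (xc4 t)) (xc2 t))
        + G32 * χ3 t + G42 * χ4 t)) :
    (∀ t : ℝ,
      HasDerivAt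
        (fun τ => plateEnergy L1 L2 ρA D_E ν w p τ
          + Hc c1 c2 a1 a2 M33 M34 M44 (xc1 τ) (xc2 τ) (xc3 τ) (xc4 τ))
        (-(R33 * χ3 t ^ 2 + 2 * R34 * χ3 t * χ4 t + R44 * χ4 t ^ 2)) t) ∧
    ((∀ a b : ℝ, 0 ≤ R33 * a ^ 2 + 2 * R34 * a * b + R44 * b ^ 2) →
      ∀ t : ℝ,
        deriv
          (fun τ => plateEnergy L1 L2 ρA D_E ν w p τ
            + Hc c1 c2 a1 a2 M33 M34 M44 (xc1 τ) (xc2 τ) (xc3 τ) (xc4 τ)) t ≤ 0) := by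

  classical
  have hρA' : ρA ≠ 0 := hρA.ne'
  have hDE' : D_E ≠ 0 := hDE.ne'
  have hIcc1 : Set.uIcc (0:ℝ) L1 = Set.Icc 0 L1 := Set.uIcc_of_le hL1.le
  have hIcc2 : Set.uIcc (0:ℝ) L2 = Set.Icc 0 L2 := Set.uIcc_of_le hL2.le
  -- boundary facts on the clamped edge
  have hwt0 : ∀ (s z2 : ℝ), z2 ∈ Set.Icc (0:ℝ) L2 → pT w s 0 z2 = 0 := by
    intro s z2 hz2
    have hz : (fun τ => w τ 0 z2) = fun _ => (0:ℝ) := funext fun τ => ((hbc τ).1 z2 hz2).1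
    show deriv (fun τ => w τ 0 z2) s = 0
    rw [hz]; exact deriv_const s 0
  have hwt1_0 : ∀ (s z2 : ℝ), z2 ∈ Set.Icc (0:ℝ) L2 → pZ1 (pT w) s 0 z2 = 0 := by
    intro s z2 hz2
    rw [← EC12.commT1 hw]
    have hz : (fun τ => pZ1 w τ 0 z2) = fun _ => (0:ℝ) := funext fun τ => ((hbc τ).1 z2 hz2).2
    show deriv (fun τ => pZ1 w τ 0 z2) s = 0
    rw [hz]; exact deriv_const s 0
  have hwt2_0 : ∀ (s z2 : ℝ), z2 ∈ Set.Ioo (0:ℝ) L2 → pZ2 (pT w) s 0 z2 = 0 := by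
    intro s z2 hz2
    have hev : (fun b => pT w s 0 b) =ᶠ[nhds z2] (fun _ => (0:ℝ)) := by
      filter_upwards [Ioo_mem_nhds hz2.1 hz2.2] with b hb
      exact hwt0 s b (Set.Ioo_subset_Icc_self hb)
    show deriv (fun b => pT w s 0 b) z2 = 0
    rw [hev.deriv_eq]; exact deriv_const z2 0
  have main : ∀ t : ℝ,
      HasDerivAt
        (fun τ => plateEnergy L1 L2 ρA D_E ν w p τ
          + Hc c1 c2 a1 a2 M33 M34 M44 (xc1 τ) (xc2 τ) (xc3 τ) (xc4 τ))
        (-(R33 * χ3 t ^ 2 + 2 * R34 * χ3 t * χ4 t + R44 * χ4 t ^ 2)) t := by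
    intro t
    -- controller gradient components
    have hχ3v : χ3 t = M33 * xc3 t + M34 * xc4 t := by
      have h0 := ((hasDerivAt_const (xc3 t)
            (c1 / 2 * (xc1 t - a1) ^ 2)).add (hasDerivAt_const (xc3 t)
            (c2 / 2 * (xc2 t - a2) ^ 2))).add
        ((((((hasDerivAt_id (xc3 t)).pow 2).const_mul M33).add
            (((hasDerivAt_id (xc3 t)).const_mul (2 * M34)).mul_const (xc4 t))).add
          (hasDerivAt_const (xc3 t) (M44 * xc4 t ^ 2))).const_mul (1 / 2))
      exact (hχ3 t).trans (h0.deriv.trans (by simp only [id_eq]; push_cast; ring))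
    have hχ4v : χ4 t = M34 * xc3 t + M44 * xc4 t := by
      have h0 := ((hasDerivAt_const (xc4 t)
            (c1 / 2 * (xc1 t - a1) ^ 2)).add (hasDerivAt_const (xc4 t)
            (c2 / 2 * (xc2 t - a2) ^ 2))).add
        ((((hasDerivAt_const (xc4 t) (M33 * xc3 t ^ 2)).add
            ((hasDerivAt_id (xc4 t)).const_mul (2 * M34 * xc3 t))).add
          (((hasDerivAt_id (xc4 t)).pow 2).const_mul M44)).const_mul (1 / 2))
      exact (hχ4 t).trans (h0.deriv.trans (by simp only [id_eq]; push_cast; ring))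
    have hH1 : deriv (fun s => Hc c1 c2 a1 a2 M33 M34 M44 s (xc2 t) (xc3 t) (xc4 t)) (xc1 t)
        = c1 * (xc1 t - a1) := by
      have h0 := (((((hasDerivAt_id (xc1 t)).sub_const a1).pow 2).const_mul (c1 / 2)).add
          (hasDerivAt_const (xc1 t) (c2 / 2 * (xc2 t - a2) ^ 2))).add
        (hasDerivAt_const (xc1 t)
          (1 / 2 * (M33 * xc3 t ^ 2 + 2 * M34 * xc3 t * xc4 t + M44 * xc4 t ^ 2)))
      exact h0.deriv.trans (by simp only [id_eq]; push_cast; ring)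
    have hH2 : deriv (fun s => Hc c1 c2 a1 a2 M33 M34 M44 (xc1 t) s (xc3 t) (xc4 t)) (xc2 t)
        = c2 * (xc2 t - a2) := by
      have h0 := ((hasDerivAt_const (xc2 t) (c1 / 2 * (xc1 t - a1) ^ 2)).add
          ((((hasDerivAt_id (xc2 t)).sub_const a2).pow 2).const_mul (c2 / 2))).add
        (hasDerivAt_const (xc2 t)
          (1 / 2 * (M33 * xc3 t ^ 2 + 2 * M34 * xc3 t * xc4 t + M44 * xc4 t ^ 2)))
      exact h0.deriv.trans (by simp only [id_eq]; push_cast; ring)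
    -- derivative of the plate energy
    have hg : SmoothField (plateDensity ρA D_E ν w p) := EC12.sfDens hw hp
    have hED := EC12.hasDerivAt_nested L1 L2 hg t
    have key : (∫ a in (0:ℝ)..L1, ∫ b in (0:ℝ)..L2, pT (plateDensity ρA D_E ν w p) t a b)
        = u1 t * uc1 t + u2 t * uc2 t := by
      have step1 : (∫ a in (0:ℝ)..L1, ∫ b in (0:ℝ)..L2, pT (plateDensity ρA D_E ν w p) t a b)
          = ∫ a in (0:ℝ)..L1, ∫ b in (0:ℝ)..L2,
              D_E * (pZ1 (EC12.F1 ν w) t a b + pZ2 (EC12.F2 ν w) t a b) := by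
        apply intervalIntegral.integral_congr
        intro a ha
        apply intervalIntegral.integral_congr
        intro b hb
        rw [hIcc1] at ha; rw [hIcc2] at hb
        exact EC12.pT_density hρA' hw hp t a b (hdyn t a ha b hb).1 (hdyn t a ha b hb).2
      have step2 : (∫ a in (0:ℝ)..L1, ∫ b in (0:ℝ)..L2,
              D_E * (pZ1 (EC12.F1 ν w) t a b + pZ2 (EC12.F2 ν w) t a b))
          = D_E * ((∫ a in (0:ℝ)..L1, ∫ b in (0:ℝ)..L2, pZ1 (EC12.F1 ν w) t a b)
              + ∫ a in (0:ℝ)..L1, ∫ b in (0:ℝ)..L2, pZ2 (EC12.F2 ν w) t a b) := by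
        have e1 : Set.EqOn
            (fun a => ∫ b in (0:ℝ)..L2,
              D_E * (pZ1 (EC12.F1 ν w) t a b + pZ2 (EC12.F2 ν w) t a b))
            (fun a => D_E * ((∫ b in (0:ℝ)..L2, pZ1 (EC12.F1 ν w) t a b)
              + ∫ b in (0:ℝ)..L2, pZ2 (EC12.F2 ν w) t a b))
            (Set.uIcc (0:ℝ) L1) := by
          intro a _
          simp only
          rw [intervalIntegral.integral_const_mul, intervalIntegral.integral_add
            ((EC12.cont_s2 (EC12.sfZ1 (EC12.sfF1 hw)) t a).intervalIntegrable _ _)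
            ((EC12.cont_s2 (EC12.sfZ2 (EC12.sfF2 hw)) t a).intervalIntegrable _ _)]
        rw [intervalIntegral.integral_congr e1, intervalIntegral.integral_const_mul,
          intervalIntegral.integral_add
            ((intervalIntegral.continuous_parametric_intervalIntegral_of_continuous'
              (f := fun a b => pZ1 (EC12.F1 ν w) t a b)
              (EC12.cont12 (EC12.sfZ1 (EC12.sfF1 hw)) t) 0 L2).intervalIntegrable _ _)
            ((intervalIntegral.continuous_parametric_intervalIntegral_of_continuous'
              (f := fun a b => pZ2 (EC12.F2 ν w) t a b)
              (EC12.cont12 (EC12.sfZ2 (EC12.sfF2 hw)) t) 0 L2).intervalIntegrable _ _)]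
      have hI1 : (∫ a in (0:ℝ)..L1, ∫ b in (0:ℝ)..L2, pZ1 (EC12.F1 ν w) t a b) = 0 := by
        rw [EC12.swapInt hL1.le hL2.le _ (EC12.cont12 (EC12.sfZ1 (EC12.sfF1 hw)) t)]
        have e2 : Set.EqOn (fun b => ∫ a in (0:ℝ)..L1, pZ1 (EC12.F1 ν w) t a b)
            (fun b => EC12.F1 ν w t L1 b - EC12.F1 ν w t 0 b) (Set.uIcc (0:ℝ) L2) :=
          fun b _ => EC12.int_pZ1 (EC12.sfF1 hw) t b 0 L1
        rw [intervalIntegral.integral_congr e2, intervalIntegral.integral_sub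
          ((EC12.cont_s2 (EC12.sfF1 hw) t L1).intervalIntegrable _ _)
          ((EC12.cont_s2 (EC12.sfF1 hw) t 0).intervalIntegrable _ _)]
        have hL1edge : (∫ b in (0:ℝ)..L2, EC12.F1 ν w t L1 b) = 0 := by
          have e3 : Set.EqOn (fun b => EC12.F1 ν w t L1 b)
              (fun b => (1 - ν) * pZ2 (EC12.F0 w) t L1 b) (Set.uIcc (0:ℝ) L2) := by
            intro b hb
            rw [hIcc2] at hb
            have hm := ((hbc t).2.1 b hb).2
            have hs := ((hbc t).2.1 b hb).1
            simp only [EC12.F1]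
            rw [EC12.pZ2_F0 hw]
            linear_combination pZ1 (pT w) t L1 b * hm - pT w t L1 b * hs
          rw [intervalIntegral.integral_congr e3, intervalIntegral.integral_const_mul,
            EC12.int_pZ2 (EC12.sfF0 hw) t L1 0 L2]
          simp only [EC12.F0]
          rw [(hbc t).2.2.2.1, (hbc t).2.2.2.2]
          ring
        have h0edge : (∫ b in (0:ℝ)..L2, EC12.F1 ν w t 0 b) = 0 := by
          rw [intervalIntegral.integral_of_le hL2.le]
          have hne : ∀ᵐ b : ℝ, b ≠ L2 := by
            filter_upwards [MeasureTheory.compl_mem_ae_iff.mpr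
              (MeasureTheory.measure_singleton (μ := MeasureTheory.volume) L2)] with b hb
            simpa using hb
          have hz : ∀ᵐ b ∂(MeasureTheory.volume.restrict (Set.Ioc (0:ℝ) L2)),
              EC12.F1 ν w t 0 b = 0 := by
            rw [MeasureTheory.ae_restrict_iff' measurableSet_Ioc]
            filter_upwards [hne] with b hb hbIoc
            have hbo : b ∈ Set.Ioo (0:ℝ) L2 := ⟨hbIoc.1, lt_of_le_of_ne hbIoc.2 hb⟩
            simp only [EC12.F1]
            rw [hwt0 t b (Set.Ioo_subset_Icc_self hbo),
              hwt1_0 t b (Set.Ioo_subset_Icc_self hbo), hwt2_0 t b hbo]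
            ring
          exact MeasureTheory.integral_eq_zero_of_ae hz
        rw [hL1edge, h0edge]; ring
      have hI2 : (∫ a in (0:ℝ)..L1, ∫ b in (0:ℝ)..L2, pZ2 (EC12.F2 ν w) t a b)
          = (u1 t * uc1 t + u2 t * uc2 t) / D_E := by
        have e4 : Set.EqOn (fun a => ∫ b in (0:ℝ)..L2, pZ2 (EC12.F2 ν w) t a b)
            (fun a => ((1 - ν) * pZ1 (EC12.F0 w) t a L2
                + u2 t / D_E * (Λ2 a * pT w t a L2))
              - ((1 - ν) * pZ1 (EC12.F0 w) t a 0
                - u1 t / D_E * (Λ1 a * pT w t a 0))) (Set.uIcc (0:ℝ) L1) := by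
          intro a ha
          rw [hIcc1] at ha
          simp only
          rw [EC12.int_pZ2 (EC12.sfF2 hw) t a 0 L2]
          have hm2 := ((hbc t).2.2.1 a ha).2
          have hm0 := ((hbc t).2.2.1 a ha).1
          have hq0 := (hact t a ha).1
          have hqL := (hact t a ha).2
          simp only [Q1] at hq0 hqL
          have hq0' : pZ2 (pZ2 (pZ2 w)) t a 0 + (2 - ν) * pZ1 (pZ1 (pZ2 w)) t a 0
              = Λ1 a * u1 t / D_E := by
            field_simp
            linear_combination hq0
          have hqL' : pZ2 (pZ2 (pZ2 w)) t a L2 + (2 - ν) * pZ1 (pZ1 (pZ2 w)) t a L2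
              = -(Λ2 a * u2 t) / D_E := by
            field_simp
            linear_combination hqL
          simp only [EC12.F2]
          rw [EC12.pZ1_F0 hw, EC12.pZ1_F0 hw]
          linear_combination pZ2 (pT w) t a L2 * hm2 - pZ2 (pT w) t a 0 * hm0
            - pT w t a L2 * hqL' + pT w t a 0 * hq0'
        rw [intervalIntegral.integral_congr e4]
        have cw2 : IntervalIntegrable (fun a => Λ2 a * pT w t a L2) MeasureTheory.volume 0 L1 := by
          apply ContinuousOn.intervalIntegrable
          rw [hIcc1]
          exact hΛ2.mul (EC12.cont_s1 (EC12.sfT hw) t L2).continuousOn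
        have cw1 : IntervalIntegrable (fun a => Λ1 a * pT w t a 0) MeasureTheory.volume 0 L1 := by
          apply ContinuousOn.intervalIntegrable
          rw [hIcc1]
          exact hΛ1.mul (EC12.cont_s1 (EC12.sfT hw) t 0).continuousOn
        rw [intervalIntegral.integral_sub
          (((EC12.cont_s1 (EC12.sfZ1 (EC12.sfF0 hw)) t L2).intervalIntegrable _ _).const_mul
            (1 - ν) |>.add (cw2.const_mul (u2 t / D_E)))
          ((((EC12.cont_s1 (EC12.sfZ1 (EC12.sfF0 hw)) t 0).intervalIntegrable _ _).const_mul
            (1 - ν)).sub (cw1.const_mul (u1 t / D_E))),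
          intervalIntegral.integral_add
            (((EC12.cont_s1 (EC12.sfZ1 (EC12.sfF0 hw)) t L2).intervalIntegrable _ _).const_mul
              (1 - ν)) (cw2.const_mul (u2 t / D_E)),
          intervalIntegral.integral_sub
            (((EC12.cont_s1 (EC12.sfZ1 (EC12.sfF0 hw)) t 0).intervalIntegrable _ _).const_mul
              (1 - ν)) (cw1.const_mul (u1 t / D_E)),
          intervalIntegral.integral_const_mul, intervalIntegral.integral_const_mul,
          intervalIntegral.integral_const_mul, intervalIntegral.integral_const_mul,
          EC12.int_pZ1 (EC12.sfF0 hw) t L2 0 L1, EC12.int_pZ1 (EC12.sfF0 hw) t 0 0 L1,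
          ← huc1 t, ← huc2 t]
        simp only [EC12.F0]
        rw [(hbc t).2.2.2.2, (hbc t).2.2.2.1,
          hwt0 t L2 (Set.right_mem_Icc.mpr hL2.le), hwt0 t 0 (Set.left_mem_Icc.mpr hL2.le)]
        field_simp
        ring
      rw [step1, step2, hI1, hI2]
      field_simp
      ring
    rw [key] at hED
    -- derivative of the controller Hamiltonian
    have hHd : HasDerivAt
        (fun τ => Hc c1 c2 a1 a2 M33 M34 M44 (xc1 τ) (xc2 τ) (xc3 τ) (xc4 τ))
        (c1 * (xc1 t - a1) * uc1 t + c2 * (xc2 t - a2) * uc2 t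
          + χ3 t * (-(R33 * χ3 t) + (J34 - R34) * χ4 t + G31 * uc1 t + G32 * uc2 t)
          + χ4 t * (-((J34 + R34) * χ3 t) - R44 * χ4 t + G41 * uc1 t + G42 * uc2 t)) t := by
      have h0 := (((((hxc1 t).sub_const a1).pow 2).const_mul (c1 / 2)).add
          ((((hxc2 t).sub_const a2).pow 2).const_mul (c2 / 2))).add
        ((((((hxc3 t).pow 2).const_mul M33).add
            (((hxc3 t).const_mul (2 * M34)).mul (hxc4 t))).add
          (((hxc4 t).pow 2).const_mul M44)).const_mul (1 / 2))
      refine EC12.congr_d h0 ?_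
      rw [hχ3v, hχ4v]
      push_cast
      ring
    have hfinal := hED.add hHd
    refine EC12.congr_d hfinal ?_
    rw [hu1 t, hu2 t, hH1, hH2, hχ3v, hχ4v]
    ring
  refine ⟨main, ?_⟩
  intro hpsd t
  rw [(main t).deriv]
  have := hpsd (χ3 t) (χ4 t)
  linarith

end
end

section
/- Let L₁, L₂ > 0, B = [0,L₁]×[0,L₂], ρA, D_E > 0, ν ∈ ℝ, and let b₁, b₂ : [0,L₁] → ℝ be continuous. Let w̃, p̃ : ℝ × ℝ² → ℝ be smooth (the observer error) and satisfy ∂ₜw̃ = p̃/(ρA), ∂ₜp̃ = −D_E(∂₁⁴w̃ + 2∂₁²∂₂²w̃ + ∂₂⁴w̃) on ℝ × B, with, for all t: w̃ = ∂₁w̃ = 0 on the edge z¹ = 0; ∂₁³w̃ + (2−ν)∂₁∂₂²w̃ = 0 and ∂₁²w̃ + ν∂₂²w̃ = 0 on the edge z¹ = L₁; ∂₂²w̃ + ν∂₁²w̃ = 0 on both edges z² ∈ {0,L₂}; ∂₁∂₂w̃(L₁,0,t) = ∂₁∂₂w̃(L₁,L₂,t) = 0. Define the error outputs ỹ¹(t)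 = ∫₀^{L₁} b₁ ∂ₜw̃(·,0,t), ỹ²(t) = ∫₀^{L₁} b₂ ∂ₜw̃(·,L₂,t) and the weighted error displacements w̄¹(t) = ∫₀^{L₁} b₁ w̃(·,0,t), w̄²(t) = ∫₀^{L₁} b₂ w̃(·,L₂,t). Let k₁, k₂, K₁₁, K₂₂ ∈ ℝ and assume the injected boundary corrections satisfy, for all z¹ ∈ [0,L₁] and all t: D_E(∂₂³w̃ + (2−ν)∂₁²∂₂w̃)(z¹,0,t) = b₁(z¹)·(−k₁ w̄¹(t) − K₁₁ ỹ¹(t)) and D_E(∂₂³w̃ + (2−ν)∂₁²∂₂w̃)(z¹,L₂,t) = b₂(z¹)·(k₂ w̄²(t) + K₂₂ ỹ²(t)). Define the shaped error Hamiltonian 𝓗̃_d(t) = ∫_B [ p̃²/(2ρA) + (D_E/2)((∂₁²w̃)² + (∂₂²w̃)² + 2ν ∂₁²w̃ ∂₂²w̃ + 2(1−ν)(∂₁∂₂w̃)²) ] dz + (k₁/2)(w̄¹(t))² + (k₂/2)(w̄²(t))². Then for all t: d𝓗̃_d/dt = −K₁₁ (ỹ¹(t))² − K₂₂ (ỹ²(t))²;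 in particular, if K₁₁, K₂₂ ≥ 0, then 𝓗̃_d is nonincreasing. -/
open MeasureTheory intervalIntegral

noncomputable section

namespace S13
def unc (u : ℝ → ℝ → ℝ → ℝ) : ℝ × ℝ × ℝ → ℝ := fun q => u q.1 q.2.1 q.2.2

variable {u v w : ℝ → ℝ → ℝ → ℝ} {t z1 z2 : ℝ}

lemma sliceT (hu : SmoothField u) (t z1 z2 : ℝ) :
    HasDerivAt (fun s => u s z1 z2) (pT u t z1 z2) t := by
  have hc : HasDerivAt (fun s : ℝ => ((s, z1, z2) : ℝ × ℝ × ℝ)) (1, 0, 0) t :=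
    (hasDerivAt_id t).prodMk (hasDerivAt_const t (z1, z2))
  have h := ((hu.differentiable (by simp) (t, z1, z2)).hasFDerivAt).comp_hasDerivAt t hc
  exact h.differentiableAt.hasDerivAt

lemma sliceZ1 (hu : SmoothField u) (t z1 z2 : ℝ) :
    HasDerivAt (fun s => u t s z2) (pZ1 u t z1 z2) z1 := by
  have hc : HasDerivAt (fun s : ℝ => ((t, s, z2) : ℝ × ℝ × ℝ)) (0, 1, 0) z1 :=
    (hasDerivAt_const z1 t).prodMk ((hasDerivAt_id z1).prodMk (hasDerivAt_const z1 z2))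
  have h := ((hu.differentiable (by simp) (t, z1, z2)).hasFDerivAt).comp_hasDerivAt z1 hc
  exact h.differentiableAt.hasDerivAt

lemma sliceZ2 (hu : SmoothField u) (t z1 z2 : ℝ) :
    HasDerivAt (fun s => u t z1 s) (pZ2 u t z1 z2) z2 := by
  have hc : HasDerivAt (fun s : ℝ => ((t, z1, s) : ℝ × ℝ × ℝ)) (0, 0, 1) z2 :=
    (hasDerivAt_const z2 t).prodMk ((hasDerivAt_const z2 z1).prodMk (hasDerivAt_id z2))
  have h := ((hu.differentiable (by simp) (t, z1, z2)).hasFDerivAt).comp_hasDerivAt z2 hc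
  exact h.differentiableAt.hasDerivAt

lemma pT_fd (hu : SmoothField u) (t z1 z2 : ℝ) :
    pT u t z1 z2 = fderiv ℝ (unc u) (t, z1, z2) (1, 0, 0) := by
  have hc : HasDerivAt (fun s : ℝ => ((s, z1, z2) : ℝ × ℝ × ℝ)) (1, 0, 0) t :=
    (hasDerivAt_id t).prodMk (hasDerivAt_const t (z1, z2))
  have h := ((hu.differentiable (by simp) (t, z1, z2)).hasFDerivAt).comp_hasDerivAt t hc
  exact h.deriv

lemma pZ1_fd (hu : SmoothField u) (t z1 z2 : ℝ) :
    pZ1 u t z1 z2 = fderiv ℝ (unc u) (t, z1, z2) (0, 1, 0) := by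
  have hc : HasDerivAt (fun s : ℝ => ((t, s, z2) : ℝ × ℝ × ℝ)) (0, 1, 0) z1 :=
    (hasDerivAt_const z1 t).prodMk ((hasDerivAt_id z1).prodMk (hasDerivAt_const z1 z2))
  have h := ((hu.differentiable (by simp) (t, z1, z2)).hasFDerivAt).comp_hasDerivAt z1 hc
  exact h.deriv

lemma pZ2_fd (hu : SmoothField u) (t z1 z2 : ℝ) :
    pZ2 u t z1 z2 = fderiv ℝ (unc u) (t, z1, z2) (0, 0, 1) := by
  have hc : HasDerivAt (fun s : ℝ => ((t, z1, s) : ℝ × ℝ × ℝ)) (0, 0, 1) z2 :=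
    (hasDerivAt_const z2 t).prodMk ((hasDerivAt_const z2 z1).prodMk (hasDerivAt_id z2))
  have h := ((hu.differentiable (by simp) (t, z1, z2)).hasFDerivAt).comp_hasDerivAt z2 hc
  exact h.deriv

lemma smooth_fd (hu : SmoothField u) (e : ℝ × ℝ × ℝ) :
    ContDiff ℝ (⊤:ℕ∞) (fun q => fderiv ℝ (unc u) q e) :=
  (hu.fderiv_right (by simp)).clm_apply contDiff_const

lemma unc_pT (hu : SmoothField u) :
    unc (pT u) = fun q => fderiv ℝ (unc u) q (1, 0, 0) := by
  funext q; exact pT_fd hu q.1 q.2.1 q.2.2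

lemma unc_pZ1 (hu : SmoothField u) :
    unc (pZ1 u) = fun q => fderiv ℝ (unc u) q (0, 1, 0) := by
  funext q; exact pZ1_fd hu q.1 q.2.1 q.2.2

lemma unc_pZ2 (hu : SmoothField u) :
    unc (pZ2 u) = fun q => fderiv ℝ (unc u) q (0, 0, 1) := by
  funext q; exact pZ2_fd hu q.1 q.2.1 q.2.2

lemma smoothT (hu : SmoothField u) : SmoothField (pT u) := by
  show ContDiff ℝ (⊤:ℕ∞) (unc (pT u)); rw [unc_pT hu]; exact smooth_fd hu _

lemma smoothZ1 (hu : SmoothField u) : SmoothField (pZ1 u) := by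
  show ContDiff ℝ (⊤:ℕ∞) (unc (pZ1 u)); rw [unc_pZ1 hu]; exact smooth_fd hu _

lemma smoothZ2 (hu : SmoothField u) : SmoothField (pZ2 u) := by
  show ContDiff ℝ (⊤:ℕ∞) (unc (pZ2 u)); rw [unc_pZ2 hu]; exact smooth_fd hu _

lemma fderiv_swap {U : ℝ × ℝ × ℝ → ℝ} (hU : ContDiff ℝ (⊤:ℕ∞) U) (x e e' : ℝ × ℝ × ℝ) :
    fderiv ℝ (fun y => fderiv ℝ U y e') x e = fderiv ℝ (fun y => fderiv ℝ U y e) x e' := by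
  have hdU : ∀ y, HasFDerivAt U (fderiv ℝ U y) y := fun y =>
    (hU.differentiable (by simp) y).hasFDerivAt
  have hC2 : ContDiff ℝ (⊤:ℕ∞) (fderiv ℝ U) := hU.fderiv_right (by simp)
  have hf'' : HasFDerivAt (fderiv ℝ U) (fderiv ℝ (fderiv ℝ U) x) x :=
    (hC2.differentiable (by simp) x).hasFDerivAt
  have key : ∀ a b : ℝ × ℝ × ℝ,
      fderiv ℝ (fun y => fderiv ℝ U y b) x a = (fderiv ℝ (fderiv ℝ U) x a) b := by
    intro a b
    have h : HasFDerivAt (fun y => fderiv ℝ U y b)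
        ((ContinuousLinearMap.apply ℝ ℝ b).comp (fderiv ℝ (fderiv ℝ U) x)) x :=
      (ContinuousLinearMap.apply ℝ ℝ b).hasFDerivAt.comp x hf''
    rw [h.fderiv]; rfl
  rw [key, key]
  exact second_derivative_symmetric hdU hf'' e e'

lemma comm_Z1Z2 (hu : SmoothField u) : pZ1 (pZ2 u) = pZ2 (pZ1 u) := by
  funext t z1 z2
  rw [pZ1_fd (smoothZ2 hu), pZ2_fd (smoothZ1 hu),
    show unc (pZ2 u) = fun q => fderiv ℝ (unc u) q (0,0,1) from unc_pZ2 hu,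
    show unc (pZ1 u) = fun q => fderiv ℝ (unc u) q (0,1,0) from unc_pZ1 hu]
  exact fderiv_swap hu _ _ _

lemma comm_TZ1 (hu : SmoothField u) : pT (pZ1 u) = pZ1 (pT u) := by
  funext t z1 z2
  rw [pT_fd (smoothZ1 hu), pZ1_fd (smoothT hu),
    show unc (pZ1 u) = fun q => fderiv ℝ (unc u) q (0,1,0) from unc_pZ1 hu,
    show unc (pT u) = fun q => fderiv ℝ (unc u) q (1,0,0) from unc_pT hu]
  exact fderiv_swap hu _ _ _

lemma comm_TZ2 (hu : SmoothField u) : pT (pZ2 u) = pZ2 (pT u) := by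
  funext t z1 z2
  rw [pT_fd (smoothZ2 hu), pZ2_fd (smoothT hu),
    show unc (pZ2 u) = fun q => fderiv ℝ (unc u) q (0,0,1) from unc_pZ2 hu,
    show unc (pT u) = fun q => fderiv ℝ (unc u) q (1,0,0) from unc_pT hu]
  exact fderiv_swap hu _ _ _

end S13

namespace S13
variable {u v : ℝ → ℝ → ℝ → ℝ}

lemma smooth_mul (hu : SmoothField u) (hv : SmoothField v) :
    SmoothField (fun t a b => u t a b * v t a b) := ContDiff.mul hu hv

lemma smooth_add (hu : SmoothField u) (hv : SmoothField v) :
    SmoothField (fun t a b => u t a b + v t a b) := ContDiff.add hu hv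

lemma smooth_sub (hu : SmoothField u) (hv : SmoothField v) :
    SmoothField (fun t a b => u t a b - v t a b) := ContDiff.sub hu hv

lemma smooth_cmul (c : ℝ) (hu : SmoothField u) :
    SmoothField (fun t a b => c * u t a b) := ContDiff.mul contDiff_const hu

lemma cont3 {X : Type*} [TopologicalSpace X] (hu : SmoothField u) {f g h : X → ℝ}
    (hf : Continuous f) (hg : Continuous g) (hh : Continuous h) :
    Continuous fun x => u (f x) (g x) (h x) :=
  hu.continuous.comp (hf.prodMk (hg.prodMk hh))

lemma uIoc_sub_uIcc {a b : ℝ} : Set.uIoc a b ⊆ Set.uIcc a b := Set.Ioc_subset_Icc_self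

lemma hasDerivAt_intervalIntegral_param {F F' : ℝ → ℝ → ℝ} {a b : ℝ} (t0 : ℝ)
    (hF : ∀ t, ContinuousOn (F t) (Set.uIcc a b))
    (hF'j : ContinuousOn (fun q : ℝ × ℝ => F' q.1 q.2)
      ((Set.Icc (t0 - 1) (t0 + 1)) ×ˢ (Set.uIcc a b)))
    (hF'c : ContinuousOn (F' t0) (Set.uIcc a b))
    (hder : ∀ t : ℝ, ∀ x ∈ Set.uIcc a b, HasDerivAt (fun s => F s x) (F' t x) t) :
    HasDerivAt (fun t => ∫ x in a..b, F t x) (∫ x in a..b, F' t0 x) t0 := by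
  obtain ⟨C, hC⟩ := (isCompact_Icc.prod isCompact_uIcc).exists_bound_of_continuousOn hF'j
  refine (intervalIntegral.hasDerivAt_integral_of_dominated_loc_of_deriv_le
    (F := F) (F' := F') (bound := fun _ => C) (𝕜 := ℝ) (Metric.ball_mem_nhds t0 one_pos) ?_ ?_ ?_ ?_ ?_ ?_).2
  · exact Filter.Eventually.of_forall fun t =>
      ((hF t).mono uIoc_sub_uIcc).aestronglyMeasurable measurableSet_uIoc
  · exact (hF t0).intervalIntegrable
  · exact ((hF'c.mono uIoc_sub_uIcc).aestronglyMeasurable measurableSet_uIoc)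
  · refine MeasureTheory.ae_of_all _ fun x hx t ht => hC (t, x) ⟨?_, uIoc_sub_uIcc hx⟩
    have := Metric.mem_ball.1 ht
    rw [Real.dist_eq, abs_sub_lt_iff] at this
    constructor <;> linarith [this.1, this.2]
  · exact intervalIntegrable_const
  · exact MeasureTheory.ae_of_all _ fun x hx t _ => hder t x (uIoc_sub_uIcc hx)

lemma cont_param {X : Type*} [TopologicalSpace X] {G : X → ℝ → ℝ} {c d : ℝ}
    (hG : Continuous fun q : X × ℝ => G q.1 q.2) :
    Continuous fun x => ∫ y in c..d, G x y :=
  continuous_parametric_intervalIntegral_of_continuous' (f := G) hG c d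

lemma ftc {f f' : ℝ → ℝ} {a b : ℝ} (hder : ∀ x ∈ Set.uIcc a b, HasDerivAt f (f' x) x)
    (hcont : ContinuousOn f' (Set.uIcc a b)) : ∫ x in a..b, f' x = f b - f a :=
  intervalIntegral.integral_eq_sub_of_hasDerivAt hder hcont.intervalIntegrable

lemma hasDerivAt_doubleIntegral {G : ℝ → ℝ → ℝ → ℝ} (hG : SmoothField G) (a b c d t0 : ℝ) :
    HasDerivAt (fun t => ∫ x in a..b, ∫ y in c..d, G t x y)
      (∫ x in a..b, ∫ y in c..d, pT G t0 x y) t0 := by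
  apply hasDerivAt_intervalIntegral_param (F := fun t x => ∫ y in c..d, G t x y)
    (F' := fun t x => ∫ y in c..d, pT G t x y) t0
  · intro t
    exact (cont_param (cont3 hG continuous_const continuous_fst continuous_snd)).continuousOn
  · exact (cont_param (X := ℝ × ℝ) (G := fun p y => pT G p.1 p.2 y) (c := c) (d := d)
      (cont3 (smoothT hG) (continuous_fst.comp continuous_fst)
        (continuous_snd.comp continuous_fst) continuous_snd)).continuousOn
  · exact (cont_param (X := ℝ) (G := fun x y => pT G t0 x y)
      (cont3 (smoothT hG) continuous_const continuous_fst continuous_snd)).continuousOn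
  · intro t x _
    apply hasDerivAt_intervalIntegral_param (F := fun s y => G s x y)
      (F' := fun s y => pT G s x y) t
    · intro s
      exact (cont3 hG continuous_const continuous_const continuous_id').continuousOn
    · exact (cont3 (smoothT hG) continuous_fst continuous_const continuous_snd).continuousOn
    · exact (cont3 (smoothT hG) continuous_const continuous_const continuous_id').continuousOn
    · exact fun s y _ => sliceT hG s x y

def V1f (ν : ℝ) (w : ℝ → ℝ → ℝ → ℝ) : ℝ → ℝ → ℝ → ℝ := fun t z1 z2 =>
  (pZ1 (pZ1 w) t z1 z2 + ν * pZ2 (pZ2 w) t z1 z2) * pZ1 (pT w) t z1 z2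
  + (1 - ν) * pZ1 (pZ2 w) t z1 z2 * pZ2 (pT w) t z1 z2
  - pT w t z1 z2 * (pZ1 (pZ1 (pZ1 w)) t z1 z2 + pZ1 (pZ2 (pZ2 w)) t z1 z2)

def V2f (ν : ℝ) (w : ℝ → ℝ → ℝ → ℝ) : ℝ → ℝ → ℝ → ℝ := fun t z1 z2 =>
  (1 - ν) * pZ1 (pZ2 w) t z1 z2 * pZ1 (pT w) t z1 z2
  + (pZ2 (pZ2 w) t z1 z2 + ν * pZ1 (pZ1 w) t z1 z2) * pZ2 (pT w) t z1 z2
  - pT w t z1 z2 * (pZ1 (pZ1 (pZ2 w)) t z1 z2 + pZ2 (pZ2 (pZ2 w)) t z1 z2)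

variable {w p : ℝ → ℝ → ℝ → ℝ} {ν ρA D_E : ℝ}

lemma smooth_V1f (hw : SmoothField w) : SmoothField (V1f ν w) := by
  have h11 := smoothZ1 (smoothZ1 hw); have h22 := smoothZ2 (smoothZ2 hw)
  have h12 := smoothZ1 (smoothZ2 hw); have hT := smoothT hw
  have h111 := smoothZ1 (smoothZ1 (smoothZ1 hw))
  have h122 := smoothZ1 (smoothZ2 (smoothZ2 hw))
  exact (((h11.add (contDiff_const.mul h22)).mul (smoothZ1 hT)).add
    (((contDiff_const.mul h12)).mul (smoothZ2 hT))).sub (hT.mul (h111.add h122))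

lemma smooth_V2f (hw : SmoothField w) : SmoothField (V2f ν w) := by
  have h11 := smoothZ1 (smoothZ1 hw); have h22 := smoothZ2 (smoothZ2 hw)
  have h12 := smoothZ1 (smoothZ2 hw); have hT := smoothT hw
  have h112 := smoothZ1 (smoothZ1 (smoothZ2 hw))
  have h222 := smoothZ2 (smoothZ2 (smoothZ2 hw))
  exact ((((contDiff_const.mul h12)).mul (smoothZ1 hT)).add
    ((h22.add (contDiff_const.mul h11)).mul (smoothZ2 hT))).sub (hT.mul (h112.add h222))

lemma claimAB (hw : SmoothField w) (hp : SmoothField p) (hρA : ρA ≠ 0)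
    {t z1 z2 : ℝ}
    (hw_t : pT w t z1 z2 = p t z1 z2 / ρA)
    (hp_t : pT p t z1 z2 = -(D_E * biharm w t z1 z2)) :
    pT (plateDensity ρA D_E ν w p) t z1 z2
      = D_E * (pZ1 (V1f ν w) t z1 z2 + pZ2 (V2f ν w) t z1 z2) := by
  have h11 := smoothZ1 (smoothZ1 hw); have h22 := smoothZ2 (smoothZ2 hw)
  have h12 := smoothZ1 (smoothZ2 hw); have hT := smoothT hw
  have h3 : HasDerivAt (fun s => plateDensity ρA D_E ν w p s z1 z2) _ t :=
    (((sliceT hp t z1 z2).pow 2).div_const (2*ρA)).add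
      ((((((sliceT h11 t z1 z2).pow 2).add ((sliceT h22 t z1 z2).pow 2)).add
        (((sliceT h11 t z1 z2).const_mul (2*ν)).mul (sliceT h22 t z1 z2))).add
        (((sliceT h12 t z1 z2).pow 2).const_mul (2*(1-ν)))).const_mul (D_E/2))
  have hA : HasDerivAt (fun s => V1f ν w t s z2) _ z1 :=
    ((((sliceZ1 h11 t z1 z2).add ((sliceZ1 h22 t z1 z2).const_mul ν)).mul
        (sliceZ1 (smoothZ1 hT) t z1 z2)).add
      (((sliceZ1 h12 t z1 z2).const_mul (1-ν)).mul (sliceZ1 (smoothZ2 hT) t z1 z2))).sub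
      ((sliceZ1 hT t z1 z2).mul ((sliceZ1 (smoothZ1 h11) t z1 z2).add
        (sliceZ1 (smoothZ1 h22) t z1 z2)))
  have hB : HasDerivAt (fun s => V2f ν w t z1 s) _ z2 :=
    ((((sliceZ2 h12 t z1 z2).const_mul (1-ν)).mul (sliceZ2 (smoothZ1 hT) t z1 z2)).add
      (((sliceZ2 h22 t z1 z2).add ((sliceZ2 h11 t z1 z2).const_mul ν)).mul
        (sliceZ2 (smoothZ2 hT) t z1 z2))).sub
      ((sliceZ2 hT t z1 z2).mul ((sliceZ2 (smoothZ1 h12) t z1 z2).add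
        (sliceZ2 (smoothZ2 h22) t z1 z2)))
  have e3 : pT (plateDensity ρA D_E ν w p) t z1 z2 = _ := h3.deriv
  have eA : pZ1 (V1f ν w) t z1 z2 = _ := hA.deriv
  have eB : pZ2 (V2f ν w) t z1 z2 = _ := hB.deriv
  rw [e3, eA, eB]
  simp only [Pi.add_apply, Pi.mul_apply, Pi.sub_apply, Pi.pow_apply]
  have cW : pZ2 (pZ1 w) = pZ1 (pZ2 w) := (comm_Z1Z2 hw).symm
  have cZ1 : pZ2 (pZ1 (pZ1 w)) = pZ1 (pZ2 (pZ1 w)) := (comm_Z1Z2 (smoothZ1 hw)).symm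
  have cZ2 : pZ2 (pZ1 (pZ2 w)) = pZ1 (pZ2 (pZ2 w)) := (comm_Z1Z2 (smoothZ2 hw)).symm
  have cZ12 : pZ2 (pZ1 (pZ1 (pZ2 w))) = pZ1 (pZ2 (pZ1 (pZ2 w))) :=
    (comm_Z1Z2 (smoothZ1 (smoothZ2 hw))).symm
  have cT : pZ2 (pZ1 (pT w)) = pZ1 (pZ2 (pT w)) := (comm_Z1Z2 hT).symm
  simp only [comm_TZ1 hw, comm_TZ1 (smoothZ1 hw), comm_TZ1 (smoothZ2 hw),
    comm_TZ2 hw, comm_TZ2 (smoothZ2 hw), cW, cZ1, cZ2, cZ12, cT]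
  have hpe : p t z1 z2 = ρA * pT w t z1 z2 := by
    rw [hw_t]; field_simp
  rw [hp_t, hpe]
  simp only [biharm]
  field_simp
  ring

lemma intV1_L1 {L1 L2 t : ℝ} (hL2 : 0 ≤ L2) (hw : SmoothField w)
    (hbc2 : ∀ z2 ∈ Set.Icc (0:ℝ) L2,
      pZ1 (pZ1 (pZ1 w)) t L1 z2 + (2 - ν) * pZ1 (pZ2 (pZ2 w)) t L1 z2 = 0 ∧
      pZ1 (pZ1 w) t L1 z2 + ν * pZ2 (pZ2 w) t L1 z2 = 0)
    (hc0 : pZ1 (pZ2 w) t L1 0 = 0) (hcL : pZ1 (pZ2 w) t L1 L2 = 0) :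
    ∫ z2 in (0:ℝ)..L2, V1f ν w t L1 z2 = 0 := by
  have h12 := smoothZ1 (smoothZ2 hw); have hT := smoothT hw
  have key : ∫ z2 in (0:ℝ)..L2, V1f ν w t L1 z2
      = ∫ z2 in (0:ℝ)..L2, (1-ν) * (pZ2 (pZ1 (pZ2 w)) t L1 z2 * pT w t L1 z2
          + pZ1 (pZ2 w) t L1 z2 * pZ2 (pT w) t L1 z2) := by
    apply intervalIntegral.integral_congr
    intro z2 hz2
    rw [Set.uIcc_of_le hL2] at hz2
    obtain ⟨hsh, hmom⟩ := hbc2 z2 hz2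
    simp only [V1f]
    rw [← comm_Z1Z2 (smoothZ2 hw)]
    linear_combination (pZ1 (pT w) t L1 z2) * hmom - pT w t L1 z2 * hsh
  rw [key]
  have hder : ∀ x ∈ Set.uIcc (0:ℝ) L2,
      HasDerivAt (fun z2 => (1-ν) * (pZ1 (pZ2 w) t L1 z2 * pT w t L1 z2))
        ((1-ν) * (pZ2 (pZ1 (pZ2 w)) t L1 x * pT w t L1 x
          + pZ1 (pZ2 w) t L1 x * pZ2 (pT w) t L1 x)) x :=
    fun x _ => HasDerivAt.const_mul (1-ν) ((sliceZ2 h12 t L1 x).mul (sliceZ2 hT t L1 x))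
  have hcont : ContinuousOn (fun x => (1-ν) * (pZ2 (pZ1 (pZ2 w)) t L1 x * pT w t L1 x
      + pZ1 (pZ2 w) t L1 x * pZ2 (pT w) t L1 x)) (Set.uIcc (0:ℝ) L2) :=
    (continuous_const.mul
      (((cont3 (smoothZ2 (smoothZ1 (smoothZ2 hw))) continuous_const continuous_const
          continuous_id').mul (cont3 hT continuous_const continuous_const continuous_id')).add
        ((cont3 h12 continuous_const continuous_const continuous_id').mul
          (cont3 (smoothZ2 hT) continuous_const continuous_const continuous_id')))).continuousOn
  rw [ftc hder hcont, hc0, hcL]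
  ring

lemma intV1_0 {L2 t : ℝ} (hL2 : 0 ≤ L2) (hw : SmoothField w)
    (hcl : ∀ s : ℝ, ∀ z2 ∈ Set.Icc (0:ℝ) L2, w s 0 z2 = 0 ∧ pZ1 w s 0 z2 = 0) :
    ∫ z2 in (0:ℝ)..L2, V1f ν w t 0 z2 = 0 := by
  have h0 : ∀ z2 ∈ Set.Ioo (0:ℝ) L2, V1f ν w t 0 z2 = 0 := by
    intro z2 hz2
    have hzc : z2 ∈ Set.Icc (0:ℝ) L2 := Set.mem_Icc_of_Ioo hz2
    have e1 : pT w t 0 z2 = 0 := by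
      have h : (fun s => w s 0 z2) = fun _ => (0:ℝ) := funext fun s => (hcl s z2 hzc).1
      show deriv (fun s => w s 0 z2) t = 0
      rw [h, deriv_const]
    have e2 : pZ1 (pT w) t 0 z2 = 0 := by
      rw [← comm_TZ1 hw]
      have h : (fun s => pZ1 w s 0 z2) = fun _ => (0:ℝ) := funext fun s => (hcl s z2 hzc).2
      show deriv (fun s => pZ1 w s 0 z2) t = 0
      rw [h, deriv_const]
    have e3 : pZ2 (pT w) t 0 z2 = 0 := by
      have hev : (fun s => pT w t 0 s) =ᶠ[nhds z2] fun _ => (0:ℝ) := by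
        filter_upwards [Icc_mem_nhds hz2.1 hz2.2] with s hs
        have h : (fun r => w r 0 s) = fun _ => (0:ℝ) := funext fun r => (hcl r s hs).1
        show deriv (fun r => w r 0 s) t = 0
        rw [h, deriv_const]
      show deriv (fun s => pT w t 0 s) z2 = 0
      rw [hev.deriv_eq, deriv_const]
    simp only [V1f, e1, e2, e3]; ring
  rw [intervalIntegral.integral_of_le hL2, MeasureTheory.integral_Ioc_eq_integral_Ioo,
    MeasureTheory.setIntegral_congr_fun measurableSet_Ioo h0]
  simp

lemma intV2_edge {L1 t c cc : ℝ} (hL1 : 0 ≤ L1) (hD : D_E ≠ 0) (hw : SmoothField w)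
    {b : ℝ → ℝ} (hb : ContinuousOn b (Set.Icc 0 L1))
    (hmom : ∀ z1 ∈ Set.Icc (0:ℝ) L1,
      pZ2 (pZ2 w) t z1 c + ν * pZ1 (pZ1 w) t z1 c = 0)
    (hq : ∀ z1 ∈ Set.Icc (0:ℝ) L1,
      D_E * (pZ2 (pZ2 (pZ2 w)) t z1 c + (2 - ν) * pZ1 (pZ1 (pZ2 w)) t z1 c) = b z1 * cc)
    (hcorner : pZ1 (pZ2 w) t L1 c = 0) (h0 : pT w t 0 c = 0) :
    ∫ z1 in (0:ℝ)..L1, V2f ν w t z1 c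
      = -(cc / D_E) * ∫ z1 in (0:ℝ)..L1, b z1 * pT w t z1 c := by
  have h12 := smoothZ1 (smoothZ2 hw); have hT := smoothT hw
  have key : ∫ z1 in (0:ℝ)..L1, V2f ν w t z1 c
      = ∫ z1 in (0:ℝ)..L1, ((1-ν) * (pZ1 (pZ1 (pZ2 w)) t z1 c * pT w t z1 c
          + pZ1 (pZ2 w) t z1 c * pZ1 (pT w) t z1 c)
        + (-(cc / D_E)) * (b z1 * pT w t z1 c)) := by
    apply intervalIntegral.integral_congr
    intro z1 hz1
    rw [Set.uIcc_of_le hL1] at hz1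
    simp only [V2f]
    have hq' : pZ2 (pZ2 (pZ2 w)) t z1 c + (2 - ν) * pZ1 (pZ1 (pZ2 w)) t z1 c
        = b z1 * cc / D_E := by
      rw [eq_div_iff hD]; linear_combination hq z1 hz1
    linear_combination (pZ2 (pT w) t z1 c) * hmom z1 hz1 - pT w t z1 c * hq'
  rw [key]
  have hcont1 : ContinuousOn (fun z1 => (1-ν) * (pZ1 (pZ1 (pZ2 w)) t z1 c * pT w t z1 c
      + pZ1 (pZ2 w) t z1 c * pZ1 (pT w) t z1 c)) (Set.uIcc (0:ℝ) L1) :=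
    (continuous_const.mul
      (((cont3 (smoothZ1 h12) continuous_const continuous_id' continuous_const).mul
          (cont3 hT continuous_const continuous_id' continuous_const)).add
        ((cont3 h12 continuous_const continuous_id' continuous_const).mul
          (cont3 (smoothZ1 hT) continuous_const continuous_id' continuous_const)))).continuousOn
  have hcont2 : ContinuousOn (fun z1 => (-(cc / D_E)) * (b z1 * pT w t z1 c))
      (Set.uIcc (0:ℝ) L1) := by
    rw [Set.uIcc_of_le hL1]
    exact continuousOn_const.mul (hb.mul
      (cont3 hT continuous_const continuous_id' continuous_const).continuousOn)
  rw [intervalIntegral.integral_add hcont1.intervalIntegrable hcont2.intervalIntegrable]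
  have hder : ∀ x ∈ Set.uIcc (0:ℝ) L1,
      HasDerivAt (fun z1 => (1-ν) * (pZ1 (pZ2 w) t z1 c * pT w t z1 c))
        ((1-ν) * (pZ1 (pZ1 (pZ2 w)) t x c * pT w t x c
          + pZ1 (pZ2 w) t x c * pZ1 (pT w) t x c)) x :=
    fun x _ => HasDerivAt.const_mul (1-ν) ((sliceZ1 h12 t x c).mul (sliceZ1 hT t x c))
  rw [ftc hder hcont1, intervalIntegral.integral_const_mul, hcorner, h0]
  ring

lemma smooth_density (hw : SmoothField w) (hp : SmoothField p) :
    SmoothField (plateDensity ρA D_E ν w p) := by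
  have h11 := smoothZ1 (smoothZ1 hw); have h22 := smoothZ2 (smoothZ2 hw)
  have h12 := smoothZ1 (smoothZ2 hw)
  exact ((hp.pow 2).div_const _).add (contDiff_const.mul
    ((((h11.pow 2).add (h22.pow 2)).add ((contDiff_const.mul h11).mul h22)).add
      (contDiff_const.mul (h12.pow 2))))

lemma hasDerivAt_boundary_int {L1 c t : ℝ} (hw : SmoothField w) {b : ℝ → ℝ}
    (hb : ContinuousOn b (Set.Icc 0 L1)) (hL1 : 0 ≤ L1) :
    HasDerivAt (fun τ => ∫ z1 in (0:ℝ)..L1, b z1 * w τ z1 c)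
      (∫ z1 in (0:ℝ)..L1, b z1 * pT w t z1 c) t := by
  apply hasDerivAt_intervalIntegral_param t
  · intro τ; rw [Set.uIcc_of_le hL1]
    exact hb.mul (cont3 hw continuous_const continuous_id' continuous_const).continuousOn
  · apply ContinuousOn.mul
    · apply hb.comp continuous_snd.continuousOn
      intro q hq
      rw [Set.uIcc_of_le hL1] at hq
      exact hq.2
    · exact (cont3 (smoothT hw) continuous_fst continuous_snd continuous_const).continuousOn
  · rw [Set.uIcc_of_le hL1]
    exact hb.mul (cont3 (smoothT hw) continuous_const continuous_id' continuous_const).continuousOn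
  · exact fun τ x _ => HasDerivAt.const_mul (b x) (sliceT hw τ x c)
end S13


/-- energy-based observer design for the Kirchhoff–Love plate.
The observer error `(w̃, p̃)` obeys the plate dynamics with clamped/free boundary
conditions; the boundary corrections injected through the shear-force ports on
the measured edges consist of an energy-shaping part (gains `k₁, k₂`) and a
damping-injection part (gains `K₁₁, K₂₂`); then the shaped error Hamiltonian
satisfies `d𝓗̃_d/dt = −K₁₁(ỹ¹)² − K₂₂(ỹ²)²`, hence it is nonincreasing whenever
`K₁₁, K₂₂ ≥ 0`. -/
theorem stmt13 (L1 L2 ρA D_E ν : ℝ) (hL1 : 0 < L1) (hL2 : 0 < L2)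
    (hρA : 0 < ρA) (hDE : 0 < D_E)
    (b1 b2 : ℝ → ℝ) (hb1 : ContinuousOn b1 (Set.Icc 0 L1))
    (hb2 : ContinuousOn b2 (Set.Icc 0 L1))
    (wt pt : ℝ → ℝ → ℝ → ℝ) (hwt : SmoothField wt) (hpt : SmoothField pt)
    (hdyn : PlateDynamics L1 L2 ρA D_E wt pt)
    (hbc : PlateBC L1 L2 ν wt)
    (k1 k2 K11 K22 : ℝ)
    (ety1 ety2 ew1 ew2 : ℝ → ℝ)
    -- error outputs (weighted boundary velocities)
    (hty1 : ∀ t, ety1 t = ∫ z1 in (0:ℝ)..L1, b1 z1 * pT wt t z1 0)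
    (hty2 : ∀ t, ety2 t = ∫ z1 in (0:ℝ)..L1, b2 z1 * pT wt t z1 L2)
    -- weighted error displacements
    (hew1 : ∀ t, ew1 t = ∫ z1 in (0:ℝ)..L1, b1 z1 * wt t z1 0)
    (hew2 : ∀ t, ew2 t = ∫ z1 in (0:ℝ)..L1, b2 z1 * wt t z1 L2)
    -- injected boundary corrections through the shear-force ports
    (hinj : ∀ t : ℝ, ∀ z1 ∈ Set.Icc (0:ℝ) L1,
      Q1 D_E ν wt t z1 0 = b1 z1 * (-(k1 * ew1 t) - K11 * ety1 t) ∧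
      Q1 D_E ν wt t z1 L2 = b2 z1 * (k2 * ew2 t + K22 * ety2 t)) :
    (∀ t : ℝ,
      HasDerivAt
        (fun τ => plateEnergy L1 L2 ρA D_E ν wt pt τ
          + k1 / 2 * (ew1 τ) ^ 2 + k2 / 2 * (ew2 τ) ^ 2)
        (-(K11 * (ety1 t) ^ 2) - K22 * (ety2 t) ^ 2) t) ∧
    (0 ≤ K11 → 0 ≤ K22 →
      Antitone (fun τ => plateEnergy L1 L2 ρA D_E ν wt pt τ
        + k1 / 2 * (ew1 τ) ^ 2 + k2 / 2 * (ew2 τ) ^ 2)) := by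
  have hwD : D_E ≠ 0 := ne_of_gt hDE
  have hρ : ρA ≠ 0 := ne_of_gt hρA
  -- derivatives of the weighted boundary displacements
  have hew1d : ∀ t, HasDerivAt ew1 (ety1 t) t := by
    intro t
    have h := S13.hasDerivAt_boundary_int (c := 0) (t := t) hwt hb1 hL1.le
    rw [show ew1 = fun τ => ∫ z1 in (0:ℝ)..L1, b1 z1 * wt τ z1 0 from funext hew1, hty1 t]
    exact h
  have hew2d : ∀ t, HasDerivAt ew2 (ety2 t) t := by
    intro t
    have h := S13.hasDerivAt_boundary_int (c := L2) (t := t) hwt hb2 hL1.le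
    rw [show ew2 = fun τ => ∫ z1 in (0:ℝ)..L1, b2 z1 * wt τ z1 L2 from funext hew2, hty2 t]
    exact h
  -- derivative of the plate energy
  have hsmD : SmoothField (plateDensity ρA D_E ν wt pt) := S13.smooth_density hwt hpt
  have hE : ∀ t, HasDerivAt (fun τ => plateEnergy L1 L2 ρA D_E ν wt pt τ)
      (∫ z1 in (0:ℝ)..L1, ∫ z2 in (0:ℝ)..L2, pT (plateDensity ρA D_E ν wt pt) t z1 z2) t :=
    fun t => S13.hasDerivAt_doubleIntegral hsmD 0 L1 0 L2 t
  have hV1s := S13.smooth_V1f (ν := ν) hwt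
  have hV2s := S13.smooth_V2f (ν := ν) hwt
  -- value of the energy derivative
  have Aval : ∀ t, (∫ z1 in (0:ℝ)..L1, ∫ z2 in (0:ℝ)..L2,
        pT (plateDensity ρA D_E ν wt pt) t z1 z2)
      = -(k1 * ew1 t * ety1 t) - K11 * ety1 t ^ 2 - k2 * ew2 t * ety2 t
        - K22 * ety2 t ^ 2 := by
    intro t
    have hcl : ∀ s : ℝ, ∀ z2 ∈ Set.Icc (0:ℝ) L2, wt s 0 z2 = 0 ∧ pZ1 wt s 0 z2 = 0 :=
      fun s => (hbc s).1
    have hTzero : ∀ z2 ∈ Set.Icc (0:ℝ) L2, pT wt t 0 z2 = 0 := by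
      intro z2 hz2
      have h : (fun s => wt s 0 z2) = fun _ => (0:ℝ) := funext fun s => (hcl s z2 hz2).1
      show deriv (fun s => wt s 0 z2) t = 0
      rw [h, deriv_const]
    have inner_eq : ∀ z1 ∈ Set.uIcc (0:ℝ) L1,
        (∫ z2 in (0:ℝ)..L2, pT (plateDensity ρA D_E ν wt pt) t z1 z2)
          = D_E * ((∫ z2 in (0:ℝ)..L2, pZ1 (S13.V1f ν wt) t z1 z2)
              + (S13.V2f ν wt t z1 L2 - S13.V2f ν wt t z1 0)) := by
      intro z1 hz1
      rw [Set.uIcc_of_le hL1.le] at hz1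
      have hcg : (∫ z2 in (0:ℝ)..L2, pT (plateDensity ρA D_E ν wt pt) t z1 z2)
          = ∫ z2 in (0:ℝ)..L2,
              D_E * (pZ1 (S13.V1f ν wt) t z1 z2 + pZ2 (S13.V2f ν wt) t z1 z2) := by
        apply intervalIntegral.integral_congr
        intro z2 hz2
        rw [Set.uIcc_of_le hL2.le] at hz2
        exact S13.claimAB hwt hpt hρ (hdyn t z1 hz1 z2 hz2).1 (hdyn t z1 hz1 z2 hz2).2
      rw [hcg, intervalIntegral.integral_const_mul]
      congr 1
      rw [intervalIntegral.integral_add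
        (S13.cont3 (S13.smoothZ1 hV1s) continuous_const continuous_const
          continuous_id').continuousOn.intervalIntegrable
        (S13.cont3 (S13.smoothZ2 hV2s) continuous_const continuous_const
          continuous_id').continuousOn.intervalIntegrable]
      congr 1
      exact S13.ftc (fun x _ => S13.sliceZ2 hV2s t z1 x)
        (S13.cont3 (S13.smoothZ2 hV2s) continuous_const continuous_const
          continuous_id').continuousOn
    rw [intervalIntegral.integral_congr inner_eq, intervalIntegral.integral_const_mul]
    have hInt1 : IntervalIntegrable
        (fun z1 => ∫ z2 in (0:ℝ)..L2, pZ1 (S13.V1f ν wt) t z1 z2) volume 0 L1 :=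
      (S13.cont_param (X := ℝ) (G := fun x y => pZ1 (S13.V1f ν wt) t x y)
        (S13.cont3 (S13.smoothZ1 hV1s) continuous_const continuous_fst
          continuous_snd)).continuousOn.intervalIntegrable
    have hc2L : Continuous (fun z1 => S13.V2f ν wt t z1 L2) :=
      S13.cont3 hV2s continuous_const continuous_id' continuous_const
    have hc20 : Continuous (fun z1 => S13.V2f ν wt t z1 0) :=
      S13.cont3 hV2s continuous_const continuous_id' continuous_const
    rw [intervalIntegral.integral_add hInt1
      (g := fun z1 => S13.V2f ν wt t z1 L2 - S13.V2f ν wt t z1 0)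
      (hc2L.sub hc20).continuousOn.intervalIntegrable]
    have hftcV1 : (∫ z1 in (0:ℝ)..L1, ∫ z2 in (0:ℝ)..L2, pZ1 (S13.V1f ν wt) t z1 z2)
        = (∫ z2 in (0:ℝ)..L2, S13.V1f ν wt t L1 z2)
          - (∫ z2 in (0:ℝ)..L2, S13.V1f ν wt t 0 z2) := by
      apply S13.ftc (f := fun x => ∫ z2 in (0:ℝ)..L2, S13.V1f ν wt t x z2)
      · intro x _
        apply S13.hasDerivAt_intervalIntegral_param x
        · intro s
          exact (S13.cont3 hV1s continuous_const continuous_const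
            continuous_id').continuousOn
        · exact (S13.cont3 (S13.smoothZ1 hV1s) continuous_const continuous_fst
            continuous_snd).continuousOn
        · exact (S13.cont3 (S13.smoothZ1 hV1s) continuous_const continuous_const
            continuous_id').continuousOn
        · exact fun s y _ => S13.sliceZ1 hV1s t s y
      · exact (S13.cont_param (X := ℝ) (G := fun x y => pZ1 (S13.V1f ν wt) t x y)
          (S13.cont3 (S13.smoothZ1 hV1s) continuous_const continuous_fst
            continuous_snd)).continuousOn
    rw [hftcV1, S13.intV1_L1 hL2.le hwt (hbc t).2.1 (hbc t).2.2.2.1 (hbc t).2.2.2.2,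
      S13.intV1_0 hL2.le hwt hcl]
    rw [intervalIntegral.integral_sub hc2L.continuousOn.intervalIntegrable
      hc20.continuousOn.intervalIntegrable]
    rw [S13.intV2_edge (cc := k2 * ew2 t + K22 * ety2 t) hL1.le hwD hwt hb2
      (fun z1 hz1 => ((hbc t).2.2.1 z1 hz1).2)
      (fun z1 hz1 => (hinj t z1 hz1).2)
      (hbc t).2.2.2.2 (hTzero L2 ⟨hL2.le, le_refl L2⟩)]
    rw [S13.intV2_edge (cc := -(k1 * ew1 t) - K11 * ety1 t) hL1.le hwD hwt hb1
      (fun z1 hz1 => ((hbc t).2.2.1 z1 hz1).1)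
      (fun z1 hz1 => (hinj t z1 hz1).1)
      (hbc t).2.2.2.1 (hTzero 0 ⟨le_refl 0, hL2.le⟩)]
    rw [← hty1 t, ← hty2 t]
    field_simp
    ring
  -- the main derivative statement
  have main : ∀ t : ℝ,
      HasDerivAt (fun τ => plateEnergy L1 L2 ρA D_E ν wt pt τ
          + k1 / 2 * (ew1 τ) ^ 2 + k2 / 2 * (ew2 τ) ^ 2)
        (-(K11 * (ety1 t) ^ 2) - K22 * (ety2 t) ^ 2) t := by
    intro t
    have h1 : HasDerivAt (fun τ => k1 / 2 * (ew1 τ) ^ 2) (k1 * ew1 t * ety1 t) t := by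
      have h := ((hew1d t).fun_pow 2).const_mul (k1 / 2)
      refine h.congr_deriv ?_
      push_cast
      ring
    have h2 : HasDerivAt (fun τ => k2 / 2 * (ew2 τ) ^ 2) (k2 * ew2 t * ety2 t) t := by
      have h := ((hew2d t).fun_pow 2).const_mul (k2 / 2)
      refine h.congr_deriv ?_
      push_cast
      ring
    have hsum := ((hE t).add h1).add h2
    have hval : -(K11 * (ety1 t) ^ 2) - K22 * (ety2 t) ^ 2
        = (∫ z1 in (0:ℝ)..L1, ∫ z2 in (0:ℝ)..L2,
            pT (plateDensity ρA D_E ν wt pt) t z1 z2)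
          + k1 * ew1 t * ety1 t + k2 * ew2 t * ety2 t := by
      rw [Aval t]; ring
    rw [hval]
    exact hsum
  refine ⟨main, fun hK11 hK22 => ?_⟩
  apply antitone_of_deriv_nonpos
  · exact fun x => (main x).differentiableAt
  · intro x
    rw [(main x).deriv]
    have e1 := mul_nonneg hK11 (sq_nonneg (ety1 x))
    have e2 := mul_nonneg hK22 (sq_nonneg (ety2 x))
    linarith

end
end
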